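/- arXiv:0711.2195 — 7 statements merged into one kernel-verified Lean document; each statement's English description precedes it below -/
import Mathlib

section
/- Let m be a positive integer, V a finite-dimensional vector space over ℚ, and ψ : V → V a ℚ-linear endomorphism with ψ^m = id. Let K = ℚ(ζ) be the m-th cyclotomic field with ζ a primitive m-th root of unity, let W = K ⊗_ℚ V, let Ψ = id_K ⊗ ψ be the K-linear extension of ψ, and let T : W → V be the ℚ-linear trace map determined by T(c ⊗ v) = Tr_{K/ℚ}(c)·v. For each positive divisor r of m set H_r = {w ∈ W : Ψ(w) = ζ^r·w} ∩ (the image of ℚ(ζ^r) ⊗_ℚ V in W), where ℚ(ζ^r) ⊆ K denotes the subfield generated by ζ^r; each H_r is a ℚ-subspace of W. Then the ℚ-linear map from the external direct sum ⨁_{r ∣ m} H_r to V obtained by applying T on each summand is an isomorphism of ℚ-vector spaces. -/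
/-!
For `a ^ m = 1` put `Q_a = ∑_{i<m} (a Ψ)^i`. Since `(a Ψ)^m = 1`, `Q_a` lands in the
`a⁻¹`-eigenspace of `Ψ`, and on a `b`-eigenvector (`b ^ m = 1`) it is multiplication by `m` if
`a b = 1` and by `0` otherwise. The Galois group acts on the coefficients of `W`, commuting with
`Ψ`, and `1 ⊗ T w = ∑_σ σ w`.

Injectivity: for `w ∈ H_s`, `σ w` is a `σ(ζ^s)`-eigenvector, and `σ(ζ^s) = ζ^r` forces `s = r`
(the orders `m / s` and `m / r` agree) and then `σ` fixes `w ∈ ℚ(ζ^s) ⊗ V`. Hence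
`Q_{ζ^{-r}} (1 ⊗ T w)` is `#Stab(ζ^r) · m · w` for `s = r` and `0` otherwise, so
`Q_{ζ^{-r}} ∘ (1 ⊗ ·)` recovers the `r`-th component of a preimage.

Surjectivity: `∑_{s<m} Q_{ζ^{-s}} = m`, so `[K:ℚ] m v = ∑_s T (Q_{ζ^{-s}} (1 ⊗ v))`. Primitive roots
of unity of equal order are Galois conjugate over `ℚ` (cyclotomic polynomials are irreducible), so
some `σ` maps `ζ^g` to `ζ^s`, `g = gcd(s, m)`; as `T ∘ σ = T`, the `s`-th term equals
`T (Q_{ζ^{-g}} (1 ⊗ v))` with `Q_{ζ^{-g}} (1 ⊗ v) ∈ H_g`.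
-/

open TensorProduct Finset IntermediateField
open scoped DirectSum

theorem geom_sum_eq_zero_of_pow_eq_one {R : Type*} [CommRing R] [IsDomain R] {x : R} {n : ℕ}
    (hx : x ^ n = 1) (hx1 : x ≠ 1) : ∑ i ∈ range n, x ^ i = 0 := by
  have h := mul_geom_sum x n
  rw [hx, sub_self] at h
  exact (mul_eq_zero.mp h).resolve_left (sub_ne_zero.mpr hx1)

namespace Module.End

variable {R M : Type*} [CommRing R] [AddCommGroup M] [Module R M]

noncomputable def twistedSum (f : Module.End R M) (n : ℕ) (a : R) : Module.End R M :=
  ∑ i ∈ range n, (a • f) ^ i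

variable {f : Module.End R M} {n : ℕ}

theorem smul_mul_twistedSum (hf : f ^ n = 1) {a : R} (ha : a ^ n = 1) :
    (a • f) * twistedSum f n a = twistedSum f n a := by
  have h := mul_geom_sum (a • f) n
  rwa [smul_pow, ha, hf, one_smul, sub_self, sub_mul, one_mul, sub_eq_zero] at h

theorem twistedSum_mem_eigenspace (hf : f ^ n = 1) {a b : R} (hb : b ^ n = 1) (hab : a * b = 1)
    (w : M) : twistedSum f n a w ∈ f.eigenspace b := by
  have ha : a ^ n = 1 := by simpa [mul_pow, hb] using congr($hab ^ n)
  have h := congr($(smul_mul_twistedSum hf ha) w)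
  rw [mem_eigenspace_iff]
  calc f (twistedSum f n a w) = (b * a) • f (twistedSum f n a w) := by
        rw [mul_comm, hab, one_smul]
    _ = b • twistedSum f n a w := by
        rw [mul_smul, ← LinearMap.smul_apply, ← Module.End.mul_apply, h]

theorem twistedSum_apply_of_apply_eq {a b : R} {w : M} (hw : f w = b • w) :
    twistedSum f n a w = (∑ i ∈ range n, (a * b) ^ i) • w := by
  have hpow (i : ℕ) : ((a • f) ^ i) w = (a * b) ^ i • w := by
    induction i with
    | zero => simp
    | succ i ih => rw [pow_succ', mul_apply, ih, map_smul, LinearMap.smul_apply, hw, smul_smul,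
        smul_smul, pow_succ, mul_assoc]
  simp only [twistedSum, LinearMap.sum_apply, hpow, Finset.sum_smul]

theorem twistedSum_apply_of_mul_eq_one {a b : R} {w : M} (hw : f w = b • w) (hab : a * b = 1) :
    twistedSum f n a w = (n : R) • w := by
  simp [twistedSum_apply_of_apply_eq hw, hab]

theorem twistedSum_apply_eq_zero [IsDomain R] {a b : R} {w : M} (hw : f w = b • w)
    (ha : a ^ n = 1) (hb : b ^ n = 1) (hab : a * b ≠ 1) : twistedSum f n a w = 0 := by
  rw [twistedSum_apply_of_apply_eq hw,
    geom_sum_eq_zero_of_pow_eq_one (by rw [mul_pow, ha, hb, one_mul]) hab, zero_smul]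

theorem sum_twistedSum [IsDomain R] {ζ : R} (hζ : IsPrimitiveRoot ζ n) :
    ∑ s ∈ range n, twistedSum f n (ζ ^ s) = (n : R) • 1 := by
  have hcoeff : ∀ i ∈ range n, ∑ s ∈ range n, (ζ ^ s) ^ i • f ^ i =
      if i = 0 then (n : R) • 1 else 0 := by
    intro i hi
    simp_rw [← pow_mul, mul_comm _ i, pow_mul, ← Finset.sum_smul]
    split_ifs with h0
    · simp [h0]
    · rw [geom_sum_eq_zero_of_pow_eq_one (by rw [← pow_mul, mul_comm, pow_mul, hζ.pow_eq_one,
        one_pow]) (hζ.pow_ne_one_of_pos_of_lt h0 (mem_range.mp hi)), zero_smul]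
  simp_rw [twistedSum, smul_pow]
  rw [Finset.sum_comm, Finset.sum_congr rfl hcoeff, Finset.sum_ite_eq']
  simp +contextual

end Module.End

theorem AlgEquiv.apply_eq_self_of_mem_adjoin_simple {F K : Type*} [Field F] [Field K] [Algebra F K]
    {σ : K ≃ₐ[F] K} {μ : K} (hσ : σ μ = μ) {x : K} (hx : x ∈ F⟮μ⟯) : σ x = x := by
  have h : ((σ : K →ₐ[F] K).comp F⟮μ⟯.val) = F⟮μ⟯.val :=
    adjoin_algHom_ext F fun y hy => by
      rw [Set.mem_singleton_iff] at hy
      subst hy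
      exact hσ
  exact congr($h ⟨x, hx⟩)

theorem IsPrimitiveRoot.exists_algEquiv_apply_eq {K : Type*} [Field K] [Algebra ℚ K] [Normal ℚ K]
    {k : ℕ} (hk : 0 < k) {μ ν : K} (hμ : IsPrimitiveRoot μ k) (hν : IsPrimitiveRoot ν k) :
    ∃ σ : K ≃ₐ[ℚ] K, σ μ = ν := by
  have : CharZero K := charZero_of_injective_algebraMap (algebraMap ℚ K).injective
  -- `cyclotomic_eq_minpoly_rat` is stated for the canonical `ℚ`-algebra structure on `K`.
  obtain rfl : ‹Algebra ℚ K› = DivisionRing.toRatAlgebra := Subsingleton.elim _ _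
  refine (Normal.minpoly_eq_iff_mem_orbit K).mp ?_
  rw [← Polynomial.cyclotomic_eq_minpoly_rat hμ hk, ← Polynomial.cyclotomic_eq_minpoly_rat hν hk]

theorem IsPrimitiveRoot.exists_algEquiv_pow_gcd {K : Type*} [Field K] [Algebra ℚ K] [Normal ℚ K]
    {m : ℕ} (hm : 0 < m) {ζ : K} (hζ : IsPrimitiveRoot ζ m) (s : ℕ) :
    ∃ σ : K ≃ₐ[ℚ] K, σ (ζ ^ s.gcd m) = ζ ^ s := by
  have hg : 0 < s.gcd m := Nat.gcd_pos_of_pos_right s hm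
  have hprim : IsPrimitiveRoot (ζ ^ s.gcd m) (m / s.gcd m) :=
    hζ.pow hm (Nat.mul_div_cancel' (Nat.gcd_dvd_right s m)).symm
  have hs : ζ ^ s = (ζ ^ s.gcd m) ^ (s / s.gcd m) := by
    rw [← pow_mul, Nat.mul_div_cancel' (Nat.gcd_dvd_left s m)]
  refine hprim.exists_algEquiv_apply_eq (Nat.div_pos (Nat.gcd_le_right s hm) hg) ?_
  rw [hs]
  exact hprim.pow_of_coprime _ (Nat.coprime_div_gcd_div_gcd hg)

theorem IsPrimitiveRoot.eq_of_algEquiv_pow_eq {F K : Type*} [Field F] [Field K] [Algebra F K]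
    {m : ℕ} (hm : 0 < m) {ζ : K} (hζ : IsPrimitiveRoot ζ m) {s r : ℕ} (hs : s ∣ m) (hr : r ∣ m)
    {σ : K ≃ₐ[F] K} (h : σ (ζ ^ s) = ζ ^ r) : s = r := by
  have hσs : IsPrimitiveRoot (ζ ^ r) (m / s) := by
    rw [← h]
    exact (hζ.pow hm (Nat.mul_div_cancel' hs).symm).map_of_injective σ.injective
  have := hσs.unique (hζ.pow hm (Nat.mul_div_cancel' hr).symm)
  rw [← Nat.div_div_self hs hm.ne', this, Nat.div_div_self hr hm.ne']

section CoeffAction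

variable {F K V : Type*} [Field F] [Field K] [Algebra F K] [AddCommGroup V] [Module F V]

variable (V) in
noncomputable def coeffAction (σ : K ≃ₐ[F] K) : K ⊗[F] V →ₗ[F] K ⊗[F] V :=
  σ.toLinearMap.rTensor V

@[simp]
theorem coeffAction_tmul (σ : K ≃ₐ[F] K) (c : K) (v : V) :
    coeffAction V σ (c ⊗ₜ v) = σ c ⊗ₜ v := rfl

theorem coeffAction_smul (σ : K ≃ₐ[F] K) (c : K) (w : K ⊗[F] V) :
    coeffAction V σ (c • w) = σ c • coeffAction V σ w := by
  induction w using TensorProduct.induction_on with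
  | zero => simp
  | tmul x v => simp [smul_tmul']
  | add x y hx hy => simp only [smul_add, map_add, hx, hy]

theorem coeffAction_baseChange (σ : K ≃ₐ[F] K) (ψ : V →ₗ[F] V) (w : K ⊗[F] V) :
    coeffAction V σ (ψ.baseChange K w) = ψ.baseChange K (coeffAction V σ w) := by
  induction w using TensorProduct.induction_on with
  | zero => simp
  | tmul x v => simp
  | add x y hx hy => simp only [map_add, hx, hy]

theorem coeffAction_twistedSum (σ : K ≃ₐ[F] K) (ψ : V →ₗ[F] V) (n : ℕ) (a : K) (w : K ⊗[F] V) :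
    coeffAction V σ (Module.End.twistedSum (ψ.baseChange K) n a w) =
      Module.End.twistedSum (ψ.baseChange K) n (σ a) (coeffAction V σ w) := by
  have h : Function.Semiconj (coeffAction V σ) ⇑(a • ψ.baseChange K) ⇑(σ a • ψ.baseChange K) :=
    fun w => by simp only [LinearMap.smul_apply, coeffAction_smul, coeffAction_baseChange]
  simp only [Module.End.twistedSum, LinearMap.sum_apply, map_sum, Module.End.coe_pow]
  exact sum_congr rfl fun i _ => h.iterate_right i w

theorem coeffAction_eq_self_of_mem_range {σ : K ≃ₐ[F] K} {μ : K} (hσ : σ μ = μ) {w : K ⊗[F] V}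
    (hw : w ∈ LinearMap.range (LinearMap.rTensor V
      (Subalgebra.toSubmodule F⟮μ⟯.toSubalgebra).subtype)) :
    coeffAction V σ w = w := by
  obtain ⟨w, rfl⟩ := hw
  rw [coeffAction, ← LinearMap.comp_apply, ← LinearMap.rTensor_comp]
  congr 2
  ext x
  exact σ.apply_eq_self_of_mem_adjoin_simple hσ x.2

theorem apply_coeffAction {T : K ⊗[F] V →ₗ[F] V}
    (hT : ∀ (c : K) (v : V), T (c ⊗ₜ v) = Algebra.trace F K c • v) (σ : K ≃ₐ[F] K)
    (w : K ⊗[F] V) : T (coeffAction V σ w) = T w := by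
  induction w using TensorProduct.induction_on with
  | zero => simp
  | tmul c v => rw [coeffAction_tmul, hT, hT, Algebra.trace_eq_of_algEquiv]
  | add x y hx hy => simp only [map_add, hx, hy]

theorem sum_coeffAction [FiniteDimensional F K] [IsGalois F K] {T : K ⊗[F] V →ₗ[F] V}
    (hT : ∀ (c : K) (v : V), T (c ⊗ₜ v) = Algebra.trace F K c • v) (w : K ⊗[F] V) :
    ∑ σ : K ≃ₐ[F] K, coeffAction V σ w = 1 ⊗ₜ T w := by
  induction w using TensorProduct.induction_on with
  | zero => simp
  | tmul c v =>
    simp only [coeffAction_tmul, ← sum_tmul]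
    rw [← trace_eq_sum_automorphisms, hT, tmul_smul, smul_tmul', Algebra.smul_def, mul_one]
  | add x y hx hy => simp only [map_add, sum_add_distrib, hx, hy, tmul_add]

end CoeffAction

section RationalEigenspace

variable {F K V : Type*} [Field F] [Field K] [Algebra F K] [AddCommGroup V] [Module F V]

noncomputable def rationalEigenspace (ψ : V →ₗ[F] V) (μ : K) : Submodule F (K ⊗[F] V) :=
  (Module.End.eigenspace (ψ.baseChange K) μ).restrictScalars F ⊓
    LinearMap.range (LinearMap.rTensor V (Subalgebra.toSubmodule F⟮μ⟯.toSubalgebra).subtype)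

theorem twistedSum_baseChange_one_tmul (ψ : V →ₗ[F] V) (n : ℕ) (a : K) (v : V) :
    Module.End.twistedSum (ψ.baseChange K) n a (1 ⊗ₜ v) = ∑ i ∈ range n, (a ^ i) ⊗ₜ (ψ ^ i) v := by
  simp only [Module.End.twistedSum, LinearMap.sum_apply, smul_pow, ← LinearMap.baseChange_pow,
    LinearMap.smul_apply, LinearMap.baseChange_tmul, smul_tmul', smul_eq_mul, mul_one]

theorem twistedSum_one_tmul_mem_rationalEigenspace {ψ : V →ₗ[F] V} {n : ℕ} (hψ : ψ ^ n = 1)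
    {μ : K} (hμ : μ ^ n = 1) (hμ0 : μ ≠ 0) (v : V) :
    Module.End.twistedSum (ψ.baseChange K) n μ⁻¹ (1 ⊗ₜ v) ∈ rationalEigenspace ψ μ := by
  refine ⟨?_, ?_⟩
  · have hΨ : ψ.baseChange K ^ n = 1 := by
      rw [← LinearMap.baseChange_pow, hψ, LinearMap.baseChange_one]
    exact Module.End.twistedSum_mem_eigenspace hΨ hμ (inv_mul_cancel₀ hμ0) _
  · rw [twistedSum_baseChange_one_tmul]
    refine Submodule.sum_mem _ fun i _ => ⟨⟨μ⁻¹ ^ i, ?_⟩ ⊗ₜ (ψ ^ i) v, rfl⟩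
    exact pow_mem (inv_mem (mem_adjoin_simple_self F μ)) i

noncomputable def directSumTrace (T : K ⊗[F] V →ₗ[F] V) (ψ : V →ₗ[F] V) (ζ : K) (m : ℕ) :
    (⨁ r : {r : ℕ // 0 < r ∧ r ∣ m}, rationalEigenspace ψ (ζ ^ (r : ℕ))) →ₗ[F] V :=
  DirectSum.toModule F _ V fun r => T ∘ₗ (rationalEigenspace ψ (ζ ^ (r : ℕ))).subtype

end RationalEigenspace

section Trace

variable {F K V : Type*} [Field F] [Field K] [Algebra F K] [AddCommGroup V] [Module F V]
  {T : K ⊗[F] V →ₗ[F] V} (hT : ∀ (c : K) (v : V), T (c ⊗ₜ v) = Algebra.trace F K c • v)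
  {m : ℕ} {ζ : K} (hζ : IsPrimitiveRoot ζ m)
include hT hζ

theorem twistedSum_one_tmul_apply_of_mem_rationalEigenspace [FiniteDimensional F K] [IsGalois F K]
    (hm : 0 < m) {ψ : V →ₗ[F] V} {s r : ℕ} (hs : s ∣ m) (hr : r ∣ m) {w : K ⊗[F] V}
    (hw : w ∈ rationalEigenspace ψ (ζ ^ s)) :
    Module.End.twistedSum (ψ.baseChange K) m (ζ ^ r)⁻¹ (1 ⊗ₜ T w) =
      if s = r then (Nat.card (MulAction.stabilizer (K ≃ₐ[F] K) (ζ ^ r)) * m : K) • w else 0 := by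
  classical
  obtain ⟨hw_eigen, hw_rat⟩ := Submodule.mem_inf.mp hw
  rw [Submodule.restrictScalars_mem, Module.End.mem_eigenspace_iff] at hw_eigen
  have heigen (σ : K ≃ₐ[F] K) :
      ψ.baseChange K (coeffAction V σ w) = σ (ζ ^ s) • coeffAction V σ w := by
    rw [← coeffAction_baseChange, hw_eigen, coeffAction_smul]
  have hpow (t : ℕ) : (ζ ^ t) ^ m = 1 := by rw [pow_right_comm, hζ.pow_eq_one, one_pow]
  have hmul (σ : K ≃ₐ[F] K) : (ζ ^ r)⁻¹ * σ (ζ ^ s) = 1 ↔ σ (ζ ^ s) = ζ ^ r := by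
    rw [inv_mul_eq_one₀ (pow_ne_zero _ (hζ.ne_zero hm.ne')), eq_comm]
  have hzero (σ : K ≃ₐ[F] K) (hσ : σ (ζ ^ s) ≠ ζ ^ r) :
      Module.End.twistedSum (ψ.baseChange K) m (ζ ^ r)⁻¹ (coeffAction V σ w) = 0 :=
    Module.End.twistedSum_apply_eq_zero (heigen σ) (by rw [inv_pow, hpow, inv_one])
      (by rw [← map_pow, hpow, map_one]) ((hmul σ).not.mpr hσ)
  rw [← sum_coeffAction hT w, map_sum]
  split_ifs with hsr
  · subst hsr
    have hstab (σ : K ≃ₐ[F] K) : σ ∈ MulAction.stabilizer _ (ζ ^ s) ↔ σ (ζ ^ s) = ζ ^ s := by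
      rw [MulAction.mem_stabilizer_iff, AlgEquiv.smul_def]
    have hfix : ∀ σ ∈ univ.filter (· ∈ MulAction.stabilizer _ (ζ ^ s)),
        Module.End.twistedSum (ψ.baseChange K) m (ζ ^ s)⁻¹ (coeffAction V σ w) = (m : K) • w := by
      intro σ hσ
      simp only [mem_filter, mem_univ, true_and, hstab] at hσ
      rw [Module.End.twistedSum_apply_of_mul_eq_one (heigen σ) ((hmul σ).mpr hσ),
        coeffAction_eq_self_of_mem_range hσ hw_rat]
    rw [← sum_filter_add_sum_filter_not univ (· ∈ MulAction.stabilizer _ (ζ ^ s)),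
      sum_congr rfl hfix, sum_eq_zero fun σ hσ => hzero σ (by simpa [hstab] using hσ), add_zero,
      sum_const, ← Nat.cast_smul_eq_nsmul K, smul_smul, Nat.card_eq_fintype_card,
      Fintype.card_subtype]
  · exact sum_eq_zero fun σ _ => hzero σ fun h => hsr (hζ.eq_of_algEquiv_pow_eq hm hs hr h)

theorem sum_apply_twistedSum_one_tmul (ψ : V →ₗ[F] V) (v : V) :
    ∑ s ∈ range m, T (Module.End.twistedSum (ψ.baseChange K) m (ζ ^ s)⁻¹ (1 ⊗ₜ v)) =
      (Module.finrank F K * m : ℕ) • v := by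
  simp_rw [← map_sum, ← LinearMap.sum_apply, ← inv_pow, Module.End.sum_twistedSum hζ.inv]
  rw [LinearMap.smul_apply, Module.End.one_apply, smul_tmul', smul_eq_mul, mul_one, hT,
    ← map_natCast (algebraMap F K), Algebra.trace_algebraMap,
    smul_assoc, Nat.cast_smul_eq_nsmul, mul_smul]

theorem twistedSum_comp_directSumTrace [FiniteDimensional F K] [IsGalois F K] (hm : 0 < m)
    (ψ : V →ₗ[F] V) (r : {r : ℕ // 0 < r ∧ r ∣ m}) :
    (Module.End.twistedSum (ψ.baseChange K) m (ζ ^ (r : ℕ))⁻¹).restrictScalars F ∘ₗ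
        TensorProduct.mk F K V 1 ∘ₗ directSumTrace T ψ ζ m =
      (Nat.card (MulAction.stabilizer (K ≃ₐ[F] K) (ζ ^ (r : ℕ))) * m : K) •
        ((rationalEigenspace ψ (ζ ^ (r : ℕ))).subtype ∘ₗ DirectSum.component F _ _ r) := by
  classical
  refine DirectSum.linearMap_ext F fun s => LinearMap.ext fun w => ?_
  simp only [directSumTrace, LinearMap.comp_apply, DirectSum.toModule_lof, TensorProduct.mk_apply,
    LinearMap.restrictScalars_apply, Submodule.coe_subtype,
    twistedSum_one_tmul_apply_of_mem_rationalEigenspace hT hζ hm s.2.2 r.2.2 w.2]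
  obtain rfl | hsr := eq_or_ne s r
  · simp
  · simp [Subtype.coe_ne_coe.mpr hsr, DirectSum.component.of, hsr]

theorem directSumTrace_injective [FiniteDimensional F K] [IsGalois F K] [CharZero K] (hm : 0 < m)
    (ψ : V →ₗ[F] V) :
    Function.Injective (directSumTrace T ψ ζ m) := by
  intro x y hxy
  refine DirectSum.ext_component F fun r => Subtype.ext ?_
  have hc : (Nat.card (MulAction.stabilizer (K ≃ₐ[F] K) (ζ ^ (r : ℕ))) * m : K) ≠ 0 :=
    mul_ne_zero (Nat.cast_ne_zero.mpr Nat.card_pos.ne') (Nat.cast_ne_zero.mpr hm.ne')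
  refine smul_right_injective _ hc ?_
  have hx := congr($(twistedSum_comp_directSumTrace hT hζ hm ψ r) x)
  have hy := congr($(twistedSum_comp_directSumTrace hT hζ hm ψ r) y)
  simp only [LinearMap.comp_apply, LinearMap.smul_apply, Submodule.coe_subtype] at hx hy
  rw [hxy] at hx
  exact hx.symm.trans hy

end Trace

theorem apply_twistedSum_one_tmul_pow_inv_eq_gcd {V K : Type*} [AddCommGroup V] [Module ℚ V]
    [Field K] [Algebra ℚ K] [Normal ℚ K] {T : K ⊗[ℚ] V →ₗ[ℚ] V}
    (hT : ∀ (c : K) (v : V), T (c ⊗ₜ v) = Algebra.trace ℚ K c • v) {m : ℕ} {ζ : K}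
    (hζ : IsPrimitiveRoot ζ m) (hm : 0 < m) (ψ : V →ₗ[ℚ] V) (s : ℕ) (v : V) :
    T (Module.End.twistedSum (ψ.baseChange K) m (ζ ^ s)⁻¹ (1 ⊗ₜ v)) =
      T (Module.End.twistedSum (ψ.baseChange K) m (ζ ^ s.gcd m)⁻¹ (1 ⊗ₜ v)) := by
  obtain ⟨σ, hσ⟩ := hζ.exists_algEquiv_pow_gcd hm s
  symm
  rw [← apply_coeffAction hT σ, coeffAction_twistedSum, map_inv₀, hσ, coeffAction_tmul, map_one]

theorem directSumTrace_surjective {V K : Type*} [AddCommGroup V] [Module ℚ V] [Field K]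
    [Algebra ℚ K] [FiniteDimensional ℚ K] [Normal ℚ K] {T : K ⊗[ℚ] V →ₗ[ℚ] V}
    (hT : ∀ (c : K) (v : V), T (c ⊗ₜ v) = Algebra.trace ℚ K c • v) {m : ℕ} {ζ : K}
    (hζ : IsPrimitiveRoot ζ m) (hm : 0 < m) {ψ : V →ₗ[ℚ] V} (hψ : ψ ^ m = 1) :
    Function.Surjective (directSumTrace T ψ ζ m) := by
  intro v
  have hrange (s : ℕ) : T (Module.End.twistedSum (ψ.baseChange K) m (ζ ^ s)⁻¹ (1 ⊗ₜ v)) ∈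
      LinearMap.range (directSumTrace T ψ ζ m) := by
    rw [apply_twistedSum_one_tmul_pow_inv_eq_gcd hT hζ hm]
    let g : {r : ℕ // 0 < r ∧ r ∣ m} :=
      ⟨s.gcd m, Nat.gcd_pos_of_pos_right s hm, Nat.gcd_dvd_right s m⟩
    exact ⟨DirectSum.lof ℚ _ _ g ⟨_, twistedSum_one_tmul_mem_rationalEigenspace hψ
      (by rw [pow_right_comm, hζ.pow_eq_one, one_pow]) (pow_ne_zero _ (hζ.ne_zero hm.ne')) v⟩,
      DirectSum.toModule_lof ..⟩
  have hv : v = ((Module.finrank ℚ K * m : ℕ) : ℚ)⁻¹ • ∑ s ∈ range m,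
      T (Module.End.twistedSum (ψ.baseChange K) m (ζ ^ s)⁻¹ (1 ⊗ₜ v)) := by
    have := Module.finrank_pos (R := ℚ) (M := K)
    rw [sum_apply_twistedSum_one_tmul hT hζ, ← Nat.cast_smul_eq_nsmul ℚ, smul_smul,
      inv_mul_cancel₀ (by positivity), one_smul]
  rw [hv]
  exact Submodule.smul_mem _ _ (Submodule.sum_mem _ fun s _ => hrange s)

theorem stmt_1_general (m : ℕ) (hm : 0 < m)
    (V : Type*) [AddCommGroup V] [Module ℚ V]
    (ψ : V →ₗ[ℚ] V) (hψ : ψ ^ m = 1)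
    (K : Type*) [Field K] [Algebra ℚ K]
    (hK : IsCyclotomicExtension {m} ℚ K)
    (ζ : K) (hζ : IsPrimitiveRoot ζ m)
    (T : K ⊗[ℚ] V →ₗ[ℚ] V)
    (hT : ∀ (c : K) (v : V), T (c ⊗ₜ[ℚ] v) = Algebra.trace ℚ K c • v)
    (H : {r : ℕ // 0 < r ∧ r ∣ m} → Submodule ℚ (K ⊗[ℚ] V))
    (hH : ∀ r : {r : ℕ // 0 < r ∧ r ∣ m}, H r =
      Submodule.restrictScalars ℚ
        (Module.End.eigenspace (LinearMap.baseChange K ψ) (ζ ^ (r : ℕ))) ⊓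
      LinearMap.range
        (LinearMap.rTensor V
          (Subalgebra.toSubmodule
            (IntermediateField.adjoin ℚ {ζ ^ (r : ℕ)}).toSubalgebra).subtype)) :
    Function.Bijective
      (DirectSum.toModule ℚ {r : ℕ // 0 < r ∧ r ∣ m} V
        (fun r => T ∘ₗ (H r).subtype)) := by
  have : FiniteDimensional ℚ K := IsCyclotomicExtension.finiteDimensional {m} ℚ K
  have : IsGalois ℚ K := IsCyclotomicExtension.isGalois {m} ℚ K
  have : CharZero K := charZero_of_injective_algebraMap (algebraMap ℚ K).injective
  obtain rfl : H = fun r : {r : ℕ // 0 < r ∧ r ∣ m} => rationalEigenspace ψ (ζ ^ (r : ℕ)) :=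
    funext hH
  exact ⟨directSumTrace_injective hT hζ hm ψ, directSumTrace_surjective hT hζ hm hψ⟩

theorem stmt_1 (m : ℕ) (hm : 0 < m)
    (V : Type*) [AddCommGroup V] [Module ℚ V] [FiniteDimensional ℚ V]
    (ψ : V →ₗ[ℚ] V) (hψ : ψ ^ m = 1)
    (K : Type*) [Field K] [Algebra ℚ K]
    (hK : IsCyclotomicExtension {m} ℚ K)
    (ζ : K) (hζ : IsPrimitiveRoot ζ m)
    (T : K ⊗[ℚ] V →ₗ[ℚ] V)
    (hT : ∀ (c : K) (v : V), T (c ⊗ₜ[ℚ] v) = Algebra.trace ℚ K c • v)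
    (H : {r : ℕ // 0 < r ∧ r ∣ m} → Submodule ℚ (K ⊗[ℚ] V))
    (hH : ∀ r : {r : ℕ // 0 < r ∧ r ∣ m}, H r =
      Submodule.restrictScalars ℚ
        (Module.End.eigenspace (LinearMap.baseChange K ψ) (ζ ^ (r : ℕ))) ⊓
      LinearMap.range
        (LinearMap.rTensor V
          (Subalgebra.toSubmodule
            (IntermediateField.adjoin ℚ {ζ ^ (r : ℕ)}).toSubalgebra).subtype)) :
    Function.Bijective
      (DirectSum.toModule ℚ {r : ℕ // 0 < r ∧ r ∣ m} V
        (fun r => T ∘ₗ (H r).subtype)) :=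
  stmt_1_general m hm V ψ hψ K hK ζ hζ T hT H hH
end

section
/- Let m be a positive integer, V a finite-dimensional vector space over ℚ, and ψ : V → V a ℚ-linear endomorphism with ψ^m = id. Let K = ℚ(ζ) be the m-th cyclotomic field with ζ a primitive m-th root of unity, W = K ⊗_ℚ V, Ψ = id_K ⊗ ψ, and T : W → V the ℚ-linear trace map determined by T(c ⊗ v) = Tr_{K/ℚ}(c)·v. Let j be a positive integer and r = gcd(j, m). Then T restricted to the ℚ-subspace {w ∈ W : Ψ(w) = ζ^j·w} ∩ (the image of ℚ(ζ^r) ⊗_ℚ V in W) is injective. -/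
/-!
If `T w = 0` then `1 ⊗ T w = ∑ σ w = 0`, the sum running over `Gal(K/ℚ)` acting on the
coefficients. Each conjugate `σ w` is an eigenvector of `Ψ` for `σ (ζ ^ j)`, and eigenspaces are
independent, so the terms with `σ (ζ ^ j) = ζ ^ j` already sum to zero. Such a `σ` also fixes
`ζ ^ m = 1`, hence `ζ ^ gcd j m` and all of `ℚ(ζ ^ gcd j m)`, so it fixes `w`. The partial sum is
therefore a positive multiple of `w`, and `w = 0` in characteristic zero.
-/

open TensorProduct

section AlgHomRTensor

variable {R A B M : Type*} [CommSemiring R] [CommSemiring A] [CommSemiring B]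
  [Algebra R A] [Algebra R B] [AddCommMonoid M] [Module R M]

theorem AlgHom.rTensor_smul (φ : A →ₐ[R] B) (a : A) (x : A ⊗[R] M) :
    φ.toLinearMap.rTensor M (a • x) = φ a • φ.toLinearMap.rTensor M x := by
  induction x using TensorProduct.induction_on with
  | zero => simp
  | tmul b v => simp [smul_tmul']
  | add x y hx hy => rw [smul_add, map_add, map_add, hx, hy, smul_add]

theorem AlgHom.rTensor_baseChange (φ : A →ₐ[R] B) (f : M →ₗ[R] M) (x : A ⊗[R] M) :
    φ.toLinearMap.rTensor M (f.baseChange A x) = f.baseChange B (φ.toLinearMap.rTensor M x) := by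
  rw [LinearMap.baseChange_eq_ltensor, LinearMap.baseChange_eq_ltensor, ← LinearMap.comp_apply,
    ← LinearMap.comp_apply, LinearMap.rTensor_comp_lTensor, LinearMap.lTensor_comp_rTensor]

end AlgHomRTensor

theorem AlgHom.rTensor_mem_eigenspace_baseChange {R A B M : Type*} [CommRing R] [CommRing A]
    [CommRing B] [Algebra R A] [Algebra R B] [AddCommGroup M] [Module R M] (φ : A →ₐ[R] B)
    {f : M →ₗ[R] M} {μ : A} {x : A ⊗[R] M}
    (hx : x ∈ Module.End.eigenspace (f.baseChange A) μ) :
    φ.toLinearMap.rTensor M x ∈ Module.End.eigenspace (f.baseChange B) (φ μ) := by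
  rw [Module.End.mem_eigenspace_iff] at hx ⊢
  rw [← φ.rTensor_baseChange, hx, φ.rTensor_smul]

theorem LinearMap.rTensor_apply_eq_self_of_mem_range {R A M : Type*} [CommSemiring R]
    [AddCommMonoid A] [Module R A] [AddCommMonoid M] [Module R M] {p : Submodule R A}
    {f : A →ₗ[R] A} (hf : ∀ a ∈ p, f a = a) {x : A ⊗[R] M}
    (hx : x ∈ LinearMap.range (p.subtype.rTensor M)) : f.rTensor M x = x := by
  obtain ⟨y, rfl⟩ := hx
  have hfp : f ∘ₗ p.subtype = p.subtype := LinearMap.ext fun a ↦ hf a a.2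
  rw [← LinearMap.comp_apply, ← LinearMap.rTensor_comp, hfp]

theorem AlgHom.apply_eq_self_of_mem_adjoin_simple {F E : Type*} [Field F] [Field E] [Algebra F E]
    (φ : E →ₐ[F] E) {a x : E} (ha : φ a = a) (hx : x ∈ IntermediateField.adjoin F {a}) :
    φ x = x := by
  induction hx using IntermediateField.adjoin_induction with
  | mem y hy => rw [Set.mem_singleton_iff.1 hy, ha]
  | algebraMap y => exact φ.commutes y
  | add y z _ _ hy hz => rw [map_add, hy, hz]
  | inv y _ hy => rw [map_inv₀, hy]
  | mul y z _ _ hy hz => rw [map_mul, hy, hz]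

theorem RingHom.map_pow_gcd_eq {K : Type*} [Field K] (σ : K →+* K) {x : K} {j m : ℕ}
    (hj : σ (x ^ j) = x ^ j) (hm : σ (x ^ m) = x ^ m) :
    σ (x ^ Nat.gcd j m) = x ^ Nat.gcd j m := by
  rcases eq_or_ne x 0 with rfl | hx
  · simp
  have key : ∀ n, σ (x ^ n) = x ^ n ↔ (σ x / x) ^ n = 1 := fun n ↦ by
    rw [div_pow, div_eq_one_iff_eq (pow_ne_zero n hx), map_pow]
  rw [key] at hj hm ⊢
  exact pow_gcd_eq_one.2 ⟨hj, hm⟩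

theorem Module.End.sum_filter_eq_zero_of_sum_eq_zero {K M ι : Type*} [Field K] [DecidableEq K]
    [AddCommGroup M] [Module K M] {f : Module.End K M} {s : Finset ι} {μ : ι → K} {x : ι → M}
    (hx : ∀ i ∈ s, x i ∈ f.eigenspace (μ i)) (hsum : ∑ i ∈ s, x i = 0) (a : K) :
    ∑ i ∈ s with μ i = a, x i = 0 := by
  rw [← Finset.sum_fiberwise_of_maps_to (g := μ) (t := s.image μ)
    (fun i hi ↦ Finset.mem_image_of_mem μ hi)] at hsum
  by_cases ha : a ∈ s.image μ
  · refine (iSupIndep_iff_finsetSum_eq_zero_imp_eq_zero _).1 f.eigenspaces_iSupIndep (s.image μ)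
      (fun b ↦ ∑ i ∈ s with μ i = b, x i) (fun b _ ↦ ?_) hsum a ha
    refine Submodule.sum_mem _ fun i hi ↦ ?_
    obtain ⟨his, rfl⟩ := Finset.mem_filter.1 hi
    exact hx i his
  · refine Finset.sum_eq_zero fun i hi ↦ absurd ?_ ha
    obtain ⟨his, rfl⟩ := Finset.mem_filter.1 hi
    exact Finset.mem_image_of_mem μ his

theorem sum_galois_rTensor_eq_one_tmul {F K V : Type*} [Field F] [Field K] [Algebra F K]
    [FiniteDimensional F K] [IsGalois F K] [AddCommGroup V] [Module F V]
    (T : K ⊗[F] V →ₗ[F] V) (hT : ∀ (c : K) (v : V), T (c ⊗ₜ[F] v) = Algebra.trace F K c • v)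
    (x : K ⊗[F] V) :
    ∑ σ : Gal(K/F), (σ : K →ₐ[F] K).toLinearMap.rTensor V x = 1 ⊗ₜ T x := by
  induction x using TensorProduct.induction_on with
  | zero => simp
  | tmul c v =>
    rw [hT, ← smul_tmul, ← Algebra.algebraMap_eq_smul_one, trace_eq_sum_automorphisms, sum_tmul]
    rfl
  | add x y hx hy => simp only [map_add, Finset.sum_add_distrib, hx, hy, tmul_add]

theorem stmt_2_general (m : ℕ)
    (V : Type*) [AddCommGroup V] [Module ℚ V]
    (ψ : V →ₗ[ℚ] V)
    (K : Type*) [Field K] [Algebra ℚ K]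
    (hK : IsCyclotomicExtension {m} ℚ K)
    (ζ : K) (hζ : IsPrimitiveRoot ζ m)
    (T : K ⊗[ℚ] V →ₗ[ℚ] V)
    (hT : ∀ (c : K) (v : V), T (c ⊗ₜ[ℚ] v) = Algebra.trace ℚ K c • v)
    (j : ℕ) :
    Function.Injective
      (T ∘ₗ (Submodule.restrictScalars ℚ
          (Module.End.eigenspace (LinearMap.baseChange K ψ) (ζ ^ j)) ⊓
        LinearMap.range
          (LinearMap.rTensor V
            (Subalgebra.toSubmodule
              (IntermediateField.adjoin ℚ {ζ ^ Nat.gcd j m}).toSubalgebra).subtype)).subtype) := by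
  classical
  have := IsCyclotomicExtension.finiteDimensional {m} ℚ K
  have := IsCyclotomicExtension.isGalois {m} ℚ K
  refine (injective_iff_map_eq_zero _).2 ?_
  rintro ⟨w, hw_eig, hw_range⟩ hTw
  have hsum : ∑ σ : Gal(K/ℚ), (σ : K →ₐ[ℚ] K).toLinearMap.rTensor V w = 0 := by
    rw [sum_galois_rTensor_eq_one_tmul T hT, show T w = 0 from hTw, tmul_zero]
  have hstab := Module.End.sum_filter_eq_zero_of_sum_eq_zero
    (μ := fun σ : Gal(K/ℚ) ↦ σ (ζ ^ j))
    (x := fun σ : Gal(K/ℚ) ↦ (σ : K →ₐ[ℚ] K).toLinearMap.rTensor V w)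
    (fun σ _ ↦ (σ : K →ₐ[ℚ] K).rTensor_mem_eigenspace_baseChange hw_eig) hsum (ζ ^ j)
  have hfix (σ : Gal(K/ℚ)) (hσ : σ (ζ ^ j) = ζ ^ j) :
      (σ : K →ₐ[ℚ] K).toLinearMap.rTensor V w = w := by
    have hσm : σ (ζ ^ m) = ζ ^ m := by rw [hζ.pow_eq_one, map_one]
    refine LinearMap.rTensor_apply_eq_self_of_mem_range (fun a ha ↦ ?_) hw_range
    exact (σ : K →ₐ[ℚ] K).apply_eq_self_of_mem_adjoin_simple
      ((σ : K →+* K).map_pow_gcd_eq hσ hσm) ha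
  rw [Finset.sum_congr rfl fun σ hσ ↦ hfix σ (Finset.mem_filter.1 hσ).2, Finset.sum_const,
    ← Nat.cast_smul_eq_nsmul ℚ, smul_eq_zero, Nat.cast_eq_zero] at hstab
  exact Subtype.ext (hstab.resolve_left (Finset.card_pos.2 ⟨1, by simp⟩).ne')

theorem stmt_2 (m : ℕ) (hm : 0 < m)
    (V : Type*) [AddCommGroup V] [Module ℚ V] [FiniteDimensional ℚ V]
    (ψ : V →ₗ[ℚ] V) (hψ : ψ ^ m = 1)
    (K : Type*) [Field K] [Algebra ℚ K]
    (hK : IsCyclotomicExtension {m} ℚ K)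
    (ζ : K) (hζ : IsPrimitiveRoot ζ m)
    (T : K ⊗[ℚ] V →ₗ[ℚ] V)
    (hT : ∀ (c : K) (v : V), T (c ⊗ₜ[ℚ] v) = Algebra.trace ℚ K c • v)
    (j : ℕ) (hj : 0 < j) :
    Function.Injective
      (T ∘ₗ (Submodule.restrictScalars ℚ
          (Module.End.eigenspace (LinearMap.baseChange K ψ) (ζ ^ j)) ⊓
        LinearMap.range
          (LinearMap.rTensor V
            (Subalgebra.toSubmodule
              (IntermediateField.adjoin ℚ {ζ ^ Nat.gcd j m}).toSubalgebra).subtype)).subtype) :=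
  stmt_2_general m V ψ K hK ζ hζ T hT j
end

section
/- Let n ≥ 5 and let μ_1, …, μ_n be rational numbers with 0 < μ_k < 1 for all k, such that μ_1 + ⋯ + μ_n is an integer and μ_k ≠ 1/2 for at least one k. Then there exist pairwise distinct indices h, i, s, t ∈ {1, …, n} with μ_h + μ_i ≠ 1 and μ_s + μ_t ≠ 1. -/
/-!
If all but one of the `μ k` were `1/2`, integrality of the sum would force the last one to be
`1/2` as well; so at least two indices `a`, `b` carry a value `≠ 1/2`. Together with three further
indices this leaves five, and a case analysis on five values, two of which are `≠ 1/2`, finds two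
disjoint pairs with sum `≠ 1`: a pair with sum `1` pins down one value in terms of the other, and
three pairwise sums equal to `1` force all three values to be `1/2`.
-/

open Finset

def HasDisjointPairsSumNeOne {ι : Type*} (μ : ι → ℚ) : Prop :=
  ∃ h i s t : ι, h ≠ i ∧ h ≠ s ∧ h ≠ t ∧ i ≠ s ∧ i ≠ t ∧ s ≠ t ∧
    μ h + μ i ≠ 1 ∧ μ s + μ t ≠ 1

namespace HasDisjointPairsSumNeOne

variable {ι κ : Type*} {μ : ι → ℚ}

theorem of_pairs {h i s t : ι} (hd : h ≠ i ∧ h ≠ s ∧ h ≠ t ∧ i ≠ s ∧ i ≠ t ∧ s ≠ t)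
    (hhi : μ h + μ i ≠ 1) (hst : μ s + μ t ≠ 1) : HasDisjointPairsSumNeOne μ := by
  obtain ⟨d₁, d₂, d₃, d₄, d₅, d₆⟩ := hd
  exact ⟨h, i, s, t, d₁, d₂, d₃, d₄, d₅, d₆, hhi, hst⟩

theorem of_comp {f : κ → ι} (hf : Function.Injective f) (h : HasDisjointPairsSumNeOne (μ ∘ f)) :
    HasDisjointPairsSumNeOne μ := by
  obtain ⟨h, i, s, t, d₁, d₂, d₃, d₄, d₅, d₆, hhi, hst⟩ := h
  exact ⟨f h, f i, f s, f t, hf.ne d₁, hf.ne d₂, hf.ne d₃, hf.ne d₄, hf.ne d₅, hf.ne d₆, hhi, hst⟩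

end HasDisjointPairsSumNeOne

section FivePoints

open HasDisjointPairsSumNeOne

variable {ν : Fin 5 → ℚ}

theorem hasDisjointPairsSumNeOne_of_sum_ne_one (h0 : ν 0 ≠ 1 / 2) (h1 : ν 1 ≠ 1 / 2)
    (h01 : ν 0 + ν 1 ≠ 1) : HasDisjointPairsSumNeOne ν := by
  by_cases h23 : ν 2 + ν 3 = 1; swap
  · exact of_pairs (by decide) h01 h23
  by_cases h24 : ν 2 + ν 4 = 1; swap
  · exact of_pairs (by decide) h01 h24
  by_cases h34 : ν 3 + ν 4 = 1; swap
  · exact of_pairs (by decide) h01 h34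
  have h2 : ν 2 = 1 / 2 := by linarith
  have h3 : ν 3 = 1 / 2 := by linarith
  exact of_pairs (h := 0) (i := 2) (s := 1) (t := 3) (by decide)
    (fun h ↦ h0 (by linarith)) (fun h ↦ h1 (by linarith))

theorem hasDisjointPairsSumNeOne_of_sum_eq_one (h0 : ν 0 ≠ 1 / 2) (h01 : ν 0 + ν 1 = 1)
    (h02 : ν 0 + ν 2 ≠ 1) : HasDisjointPairsSumNeOne ν := by
  by_cases h13 : ν 1 + ν 3 = 1; swap
  · exact of_pairs (by decide) h02 h13
  by_cases h14 : ν 1 + ν 4 = 1; swap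
  · exact of_pairs (by decide) h02 h14
  -- now `ν 3 = ν 4 = 1 - ν 1 = ν 0`
  exact of_pairs (h := 0) (i := 2) (s := 3) (t := 4) (by decide) h02 (fun h ↦ h0 (by linarith))

theorem hasDisjointPairsSumNeOne_fin_five (h0 : ν 0 ≠ 1 / 2) (h1 : ν 1 ≠ 1 / 2) :
    HasDisjointPairsSumNeOne ν := by
  by_cases h01 : ν 0 + ν 1 = 1; swap
  · exact hasDisjointPairsSumNeOne_of_sum_ne_one h0 h1 h01
  by_cases h02 : ν 0 + ν 2 = 1; swap
  · exact hasDisjointPairsSumNeOne_of_sum_eq_one h0 h01 h02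
  -- now `ν 2 = ν 1`, and the roles of `0` and `1` can be exchanged
  have h12 : ν 1 + ν 2 ≠ 1 := fun h ↦ h1 (by linarith)
  exact (hasDisjointPairsSumNeOne_of_sum_eq_one (ν := ν ∘ Equiv.swap 0 1) h1 (by
    show ν 1 + ν 0 = 1; linarith) h12).of_comp (Equiv.injective _)

end FivePoints

theorem exists_ne_and_ne_half_of_sum_eq_intCast {ι : Type*} [Fintype ι] [DecidableEq ι]
    {μ : ι → ℚ} (hsum : ∃ N : ℤ, ∑ k, μ k = N) {a : ι} (h0 : 0 < μ a) (h1 : μ a < 1)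
    (ha : μ a ≠ 1 / 2) : ∃ b ≠ a, μ b ≠ 1 / 2 := by
  by_contra! hhalf
  obtain ⟨N, hN⟩ := hsum
  have h2a : 2 * μ a = ((2 * N - #(univ.erase a) : ℤ) : ℚ) := by
    rw [← add_sum_erase _ _ (mem_univ a),
      sum_congr rfl fun k hk ↦ hhalf k (ne_of_mem_erase hk), sum_const, nsmul_eq_mul] at hN
    push_cast
    linarith
  have hpos : (0 : ℚ) < ((2 * N - #(univ.erase a) : ℤ) : ℚ) := by linarith
  have hlt : ((2 * N - #(univ.erase a) : ℤ) : ℚ) < 2 := by linarith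
  have hone : 2 * N - #(univ.erase a) = 1 := by
    have := Int.cast_pos.mp hpos
    have : 2 * N - #(univ.erase a) < 2 := by exact_mod_cast hlt
    omega
  exact ha (by rw [hone] at h2a; push_cast at h2a; linarith)

theorem exists_injective_fin_with_zero_one {ι : Type*} [Fintype ι] [DecidableEq ι] {m : ℕ}
    (hm : m + 2 ≤ Fintype.card ι) {a b : ι} (hab : a ≠ b) :
    ∃ f : Fin (m + 2) → ι, Function.Injective f ∧ f 0 = a ∧ f 1 = b := by
  obtain ⟨g⟩ : Nonempty (Fin m ↪ ({a, b}ᶜ : Finset ι)) :=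
    Function.Embedding.nonempty_of_card_le <| by
      rw [Fintype.card_fin, Fintype.card_coe, card_compl, card_pair hab]; omega
  have hg : ∀ i, (g i : ι) ≠ a ∧ (g i : ι) ≠ b := fun i ↦ by
    simpa only [mem_compl, mem_insert, mem_singleton, not_or] using (g i).2
  refine ⟨Fin.cons a (Fin.cons b (Subtype.val ∘ g)), ?_, rfl, rfl⟩
  refine Fin.cons_injective_of_injective ?_ <|
    Fin.cons_injective_of_injective ?_ (Subtype.val_injective.comp g.injective)
  · simpa [hab] using fun i ↦ (hg i).1
  · simpa using fun i ↦ (hg i).2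

theorem stmt_4 (n : ℕ) (hn : 5 ≤ n) (μ : Fin n → ℚ)
    (h0 : ∀ k, 0 < μ k) (h1 : ∀ k, μ k < 1)
    (hsum : ∃ N : ℤ, ∑ k, μ k = N)
    (hne : ∃ k, μ k ≠ 1 / 2) :
    ∃ h i s t : Fin n, h ≠ i ∧ h ≠ s ∧ h ≠ t ∧ i ≠ s ∧ i ≠ t ∧ s ≠ t ∧
      μ h + μ i ≠ 1 ∧ μ s + μ t ≠ 1 := by
  obtain ⟨a, ha⟩ := hne
  obtain ⟨b, hba, hb⟩ := exists_ne_and_ne_half_of_sum_eq_intCast hsum (h0 a) (h1 a) ha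
  obtain ⟨f, hf, hf0, hf1⟩ :=
    exists_injective_fin_with_zero_one (m := 3) (by simpa using hn) hba.symm
  exact (hasDisjointPairsSumNeOne_fin_five (ν := μ ∘ f) (by rwa [Function.comp_apply, hf0])
    (by rwa [Function.comp_apply, hf1])).of_comp hf
end

section
/- Let m and n be positive integers, let d_1, …, d_n be natural numbers with gcd(m, d_1, …, d_n) = 1 and with m dividing d_1 + ⋯ + d_n, and let j be an integer with m not dividing 2j. Let S = {k ∈ {1, …, n} : m ∤ j·d_k} and for k ∈ S put μ_k = fract(j·d_k/m) ∈ (0,1). If S contains at least 5 elements, then there exist pairwise distinct indices h, i, s, t ∈ S such that μ_h + μ_i ≠ 1 and μ_s + μ_t ≠ 1. -/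
/-!
Call a pair {h, i} ⊆ S good if μ_h + μ_i ≠ 1. If the three pairs of a triangle {x, y, z} are
all bad, then 2μ_x = (μ_x + μ_y) + (μ_x + μ_z) - (μ_y + μ_z) = 1; so three points, one of which
has 2μ ≠ 1, always contain a good pair. Given two points a, b ∈ S with 2μ ≠ 1, the at least three
points of S ∖ {a, b} either contain a good pair {p, q}, and then S ∖ {p, q} contains a good pair
too, or they all have μ = 1/2, and then {a, p} and {b, q} are good.

Two such points exist. If 2μ_k = 1 for all k ∈ S, then m ∣ 2j·d_k for every k, so m ∣ 2j because
m is prime to gcd(d). If t ∈ S were the only one, then, as ∑ μ_k is an integer (because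
m ∣ ∑ j·d_k), 2μ_t = 2∑ μ_k - (|S| - 1) would be an integer in (0, 2), i.e. 2μ_t = 1.
-/

open Finset

section PairSums

variable {ι G : Type*} [DecidableEq ι] [AddCommGroup G] {μ : ι → G} {c : G}

theorem add_self_eq_of_pairwise_add_eq {x y z : G} (hxy : x + y = c) (hxz : x + z = c)
    (hyz : y + z = c) : x + x = c :=
  calc x + x = (x + y) + (x + z) - (y + z) := by abel
    _ = c := by rw [hxy, hxz, hyz, add_sub_cancel_right]

theorem exists_add_ne_of_three_le_card {T : Finset ι} (hT : 3 ≤ #T) {a : ι} (ha : a ∈ T)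
    (hac : μ a + μ a ≠ c) : ∃ h ∈ T, ∃ i ∈ T, h ≠ i ∧ μ h + μ i ≠ c := by
  by_contra! H
  obtain ⟨y, hy, z, hz, hyz⟩ := one_lt_card.1 (by rw [card_erase_of_mem ha]; omega :
    1 < #(T.erase a))
  rw [mem_erase] at hy hz
  exact hac (add_self_eq_of_pairwise_add_eq (H a ha y hy.2 hy.1.symm) (H a ha z hz.2 hz.1.symm)
    (H y hy.2 z hz.2 hyz))

theorem exists_two_disjoint_pairs_add_ne {S : Finset ι} (hS : 5 ≤ #S) {a b : ι} (ha : a ∈ S)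
    (hb : b ∈ S) (hab : a ≠ b) (hac : μ a + μ a ≠ c) (hbc : μ b + μ b ≠ c) :
    ∃ h i s t : ι, h ∈ S ∧ i ∈ S ∧ s ∈ S ∧ t ∈ S ∧
      h ≠ i ∧ h ≠ s ∧ h ≠ t ∧ i ≠ s ∧ i ≠ t ∧ s ≠ t ∧
      μ h + μ i ≠ c ∧ μ s + μ t ≠ c := by
  set R := (S.erase a).erase b
  have hR : 3 ≤ #R := by
    rw [card_erase_of_mem (mem_erase.2 ⟨hab.symm, hb⟩), card_erase_of_mem ha]; omega
  by_cases hgood : ∃ p ∈ R, ∃ q ∈ R, p ≠ q ∧ μ p + μ q ≠ c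
  · obtain ⟨p, hp, q, hq, hpq, hpqc⟩ := hgood
    simp only [R, mem_erase] at hp hq
    obtain ⟨h, hh, i, hi, hhi, hhic⟩ := exists_add_ne_of_three_le_card (T := (S.erase p).erase q)
      (by rw [card_erase_of_mem (mem_erase.2 ⟨hpq.symm, hq.2.2⟩), card_erase_of_mem hp.2.2]; omega)
      (mem_erase.2 ⟨hq.2.1.symm, mem_erase.2 ⟨hp.2.1.symm, ha⟩⟩) hac
    simp only [mem_erase] at hh hi
    exact ⟨h, i, p, q, hh.2.2, hi.2.2, hp.2.2, hq.2.2, hhi, hh.2.1, hh.1, hi.2.1, hi.1, hpq,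
      hhic, hpqc⟩
  · push Not at hgood
    have hhalf : ∀ x ∈ R, μ x + μ x = c := fun x hx => by
      by_contra hxc
      obtain ⟨p, hp, q, hq, hpq, hpqc⟩ := exists_add_ne_of_three_le_card hR hx hxc
      exact hpqc (hgood p hp q hq hpq)
    obtain ⟨p, hp, q, hq, hpq⟩ := one_lt_card.1 (by omega : 1 < #R)
    have hne {x y : ι} (hx : μ x + μ x ≠ c) (hy : y ∈ R) : μ x + μ y ≠ c := fun hxy =>
      hx (by rw [add_right_cancel (hxy.trans (hhalf y hy).symm)]; exact hhalf y hy)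
    have hap := hne hac hp
    have hbq := hne hbc hq
    simp only [R, mem_erase] at hp hq
    exact ⟨a, p, b, q, ha, hp.2.2, hb, hq.2.2, hp.2.1.symm, hab, hq.2.1.symm, hp.1, hpq,
      hq.1.symm, hap, hbq⟩

end PairSums

section Fract

variable {K : Type*} [Field K] [LinearOrder K] [IsStrictOrderedRing K] [FloorRing K]

theorem fract_intCast_div_eq_zero_iff {m : ℕ} (hm : 0 < m) {a : ℤ} :
    Int.fract ((a : K) / m) = 0 ↔ (m : ℤ) ∣ a := by
  rw [Int.fract_div_intCast_eq_div_intCast_mod, div_eq_zero_iff, Nat.cast_eq_zero,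
    or_iff_left hm.ne', Int.cast_eq_zero, Int.dvd_iff_emod_eq_zero]

theorem dvd_two_mul_of_fract_add_fract_eq_one {m : ℕ} (hm : 0 < m) {a : ℤ}
    (h : Int.fract ((a : K) / m) + Int.fract ((a : K) / m) = 1) : (m : ℤ) ∣ 2 * a := by
  have hint : ((2 * a : ℤ) : K) / m = ((2 * ⌊(a : K) / m⌋ + 1 : ℤ) : K) := by
    rw [Int.cast_mul, Int.cast_two, mul_div_assoc]
    push_cast
    linarith [Int.floor_add_fract ((a : K) / m)]
  rw [← fract_intCast_div_eq_zero_iff (K := K) hm, hint, Int.fract_intCast]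

theorem exists_sum_fract_intCast_div_eq_intCast {ι : Type*} (s : Finset ι) {x : ι → ℤ} {m : ℕ}
    (hm : 0 < m) (hx : (m : ℤ) ∣ ∑ k ∈ s, x k) :
    ∃ z : ℤ, ∑ k ∈ s, Int.fract ((x k : K) / m) = z := by
  obtain ⟨c, hc⟩ := hx
  refine ⟨c - ∑ k ∈ s, ⌊(x k : K) / m⌋, ?_⟩
  rw [Int.cast_sub, Int.cast_sum]
  simp only [Int.fract, sum_sub_distrib]
  rw [← sum_div, ← Int.cast_sum, hc, Int.cast_mul, Int.cast_natCast,
    mul_div_cancel_left₀ _ (by positivity)]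

end Fract

theorem exists_ne_add_self_ne_of_sum_eq_intCast {ι K : Type*} [DecidableEq ι] [CommRing K]
    [LinearOrder K] [IsStrictOrderedRing K] {S : Finset ι} {μ : ι → K}
    (hμ : ∀ k ∈ S, 0 < μ k ∧ μ k < 1) {z : ℤ} (hz : ∑ k ∈ S, μ k = z) {t : ι} (ht : t ∈ S)
    (htμ : μ t + μ t ≠ 1) : ∃ k ∈ S, k ≠ t ∧ μ k + μ k ≠ 1 := by
  by_contra! H
  obtain ⟨w, hw⟩ : ∃ w : ℤ, μ t + μ t = w := ⟨2 * z - (#S - 1), calc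
    μ t + μ t = ∑ k ∈ S, (μ k + μ k) - ∑ k ∈ S.erase t, (μ k + μ k) := by
      rw [← add_sum_erase S _ ht, add_sub_cancel_right]
    _ = ((2 * z - (#S - 1) : ℤ) : K) := by
      rw [sum_add_distrib, hz, sum_congr rfl fun k hk => H k (mem_of_mem_erase hk)
        (ne_of_mem_erase hk), sum_const, card_erase_of_mem ht, nsmul_one,
        Nat.cast_pred (card_pos.2 ⟨t, ht⟩)]
      push_cast
      ring⟩
  have hw0 : 0 < w := by exact_mod_cast (by linarith [hμ t ht] : (0 : K) < w)
  have hw2 : w < 2 := by exact_mod_cast (by linarith [hμ t ht] : (w : K) < 2)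
  exact htμ (by rw [hw, show w = 1 by omega, Int.cast_one])

theorem Nat.dvd_of_forall_dvd_mul_of_coprime_gcd {ι : Type*} {s : Finset ι} {d : ι → ℕ}
    {m a : ℕ} (hcop : m.Coprime (s.gcd d)) (h : ∀ k ∈ s, m ∣ a * d k) : m ∣ a :=
  hcop.dvd_of_dvd_mul_right <| by
    rw [← normalize_eq a, ← Finset.gcd_mul_left]
    exact Finset.dvd_gcd h

theorem stmt_5_general (m n : ℕ) (hm : 0 < m) (d : Fin n → ℕ)
    (hgcd : Nat.gcd m (Finset.univ.gcd d) = 1)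
    (hdiv : m ∣ ∑ k, d k)
    (j : ℤ) (hj : ¬ ((m : ℤ) ∣ 2 * j))
    (S : Finset (Fin n))
    (hS : S = Finset.univ.filter (fun k => ¬ ((m : ℤ) ∣ j * (d k : ℤ))))
    (μ : Fin n → ℚ)
    (hμ : ∀ k, μ k = Int.fract ((j : ℚ) * (d k : ℚ) / (m : ℚ)))
    (hcard : 5 ≤ S.card) :
    ∃ h i s t : Fin n, h ∈ S ∧ i ∈ S ∧ s ∈ S ∧ t ∈ S ∧
      h ≠ i ∧ h ≠ s ∧ h ≠ t ∧ i ≠ s ∧ i ≠ t ∧ s ≠ t ∧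
      μ h + μ i ≠ 1 ∧ μ s + μ t ≠ 1 := by
  have hμ' (k : Fin n) : μ k = Int.fract (((j * d k : ℤ) : ℚ) / m) := by rw [hμ k]; push_cast; rfl
  have hmemS (k : Fin n) : k ∈ S ↔ μ k ≠ 0 := by
    rw [hS, mem_filter, hμ', Ne, fract_intCast_div_eq_zero_iff hm]; simp
  have hμS (k : Fin n) (hk : k ∈ S) : 0 < μ k ∧ μ k < 1 :=
    ⟨(hμ' k ▸ Int.fract_nonneg _).lt_of_ne' ((hmemS k).1 hk), hμ' k ▸ Int.fract_lt_one _⟩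
  obtain ⟨z, hz⟩ : ∃ z : ℤ, ∑ k ∈ S, μ k = z := by
    rw [sum_subset (subset_univ S) fun k _ hk => not_not.1 ((hmemS k).not.1 hk)]
    simp_rw [hμ']
    refine exists_sum_fract_intCast_div_eq_intCast _ hm ?_
    rw [← mul_sum, ← Nat.cast_sum]
    exact (Int.natCast_dvd_natCast.2 hdiv).mul_left j
  obtain ⟨a, haS, ha⟩ : ∃ a ∈ S, μ a + μ a ≠ 1 := by
    by_contra! H
    refine hj (Int.natCast_dvd.2 (Nat.dvd_of_forall_dvd_mul_of_coprime_gcd hgcd fun k _ => ?_))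
    rw [← Int.natAbs_natCast (d k), ← Int.natAbs_mul, ← Int.natCast_dvd, mul_assoc]
    by_cases hk : k ∈ S
    · exact dvd_two_mul_of_fract_add_fract_eq_one hm (K := ℚ) (hμ' k ▸ H k hk)
    · rw [hS, mem_filter, not_and, not_not] at hk
      exact (hk (mem_univ k)).mul_left 2
  obtain ⟨b, hbS, hba, hb⟩ := exists_ne_add_self_ne_of_sum_eq_intCast hμS hz haS ha
  exact exists_two_disjoint_pairs_add_ne hcard haS hbS hba.symm ha hb

theorem stmt_5 (m n : ℕ) (hm : 0 < m) (hn : 0 < n) (d : Fin n → ℕ)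
    (hgcd : Nat.gcd m (Finset.univ.gcd d) = 1)
    (hdiv : m ∣ ∑ k, d k)
    (j : ℤ) (hj : ¬ ((m : ℤ) ∣ 2 * j))
    (S : Finset (Fin n))
    (hS : S = Finset.univ.filter (fun k => ¬ ((m : ℤ) ∣ j * (d k : ℤ))))
    (μ : Fin n → ℚ)
    (hμ : ∀ k, μ k = Int.fract ((j : ℚ) * (d k : ℚ) / (m : ℚ)))
    (hcard : 5 ≤ S.card) :
    ∃ h i s t : Fin n, h ∈ S ∧ i ∈ S ∧ s ∈ S ∧ t ∈ S ∧
      h ≠ i ∧ h ≠ s ∧ h ≠ t ∧ i ≠ s ∧ i ≠ t ∧ s ≠ t ∧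
      μ h + μ i ≠ 1 ∧ μ s + μ t ≠ 1 :=
  stmt_5_general m n hm d hgcd hdiv j hj S hS μ hμ hcard
end

section
/- Let n ≥ 3, let d_1, …, d_n and m be natural numbers such that gcd(m, gcd(d_1, …, d_n)) = 1, and let w be a positive divisor of m such that w divides d_i + d_j for all pairs of distinct indices i ≠ j. Then w divides 2. -/
/-!
Writing `2 d_k = (d_k + d_i) + (d_k + d_j) - (d_i + d_j)` for two further indices `i ≠ j`
shows `w ∣ 2 d_k` for every `k`, hence `w ∣ 2 gcd(d)`. Since `w ∣ m` and `m` is coprime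
to `gcd(d)`, `w` is coprime to `gcd(d)` and therefore divides `2`.
-/

theorem Nat.dvd_two_mul_of_dvd_add_of_dvd_add {w a b c : ℕ} (hab : w ∣ a + b) (hac : w ∣ a + c)
    (hbc : w ∣ b + c) : w ∣ 2 * a := by
  have hsum : w ∣ 2 * a + (b + c) := by
    have := dvd_add hab hac
    rwa [show a + b + (a + c) = 2 * a + (b + c) by ring] at this
  exact (Nat.dvd_add_left hbc).mp hsum

theorem Fintype.exists_ne_ne_ne_of_three_le_card {α : Type*} [Fintype α] [DecidableEq α]
    (h : 3 ≤ Fintype.card α) (k : α) : ∃ a b : α, a ≠ b ∧ a ≠ k ∧ b ≠ k := by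
  have hcard : 1 < (Finset.univ.erase k).card := by
    rw [Finset.card_erase_of_mem (Finset.mem_univ k), Finset.card_univ]
    omega
  obtain ⟨a, ha, b, hb, hab⟩ := Finset.one_lt_card.mp hcard
  exact ⟨a, b, hab, Finset.ne_of_mem_erase ha, Finset.ne_of_mem_erase hb⟩

theorem Nat.dvd_two_mul_gcd_of_dvd_add {ι : Type*} [Fintype ι] [DecidableEq ι]
    (h : 3 ≤ Fintype.card ι) {w : ℕ} {d : ι → ℕ} (hpair : ∀ i j, i ≠ j → w ∣ d i + d j) :
    w ∣ 2 * Finset.univ.gcd d := by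
  have hk : ∀ k, w ∣ 2 * d k := by
    intro k
    obtain ⟨a, b, hab, hak, hbk⟩ := Fintype.exists_ne_ne_ne_of_three_le_card h k
    exact Nat.dvd_two_mul_of_dvd_add_of_dvd_add (hpair k a hak.symm) (hpair k b hbk.symm)
      (hpair a b hab)
  have := Finset.dvd_gcd (s := Finset.univ) fun k _ => hk k
  simpa [Finset.gcd_mul_left] using this

theorem stmt_6_general (n : ℕ) (hn : 3 ≤ n) (d : Fin n → ℕ) (m : ℕ)
    (hgcd : Nat.gcd m (Finset.univ.gcd d) = 1)
    (w : ℕ) (hwm : w ∣ m)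
    (hpair : ∀ i j : Fin n, i ≠ j → w ∣ d i + d j) :
    w ∣ 2 := by
  have hcop : w.Coprime (Finset.univ.gcd d) := Nat.Coprime.coprime_dvd_left hwm hgcd
  exact hcop.dvd_of_dvd_mul_right
    (Nat.dvd_two_mul_gcd_of_dvd_add (by simpa using hn) hpair)

theorem stmt_6 (n : ℕ) (hn : 3 ≤ n) (d : Fin n → ℕ) (m : ℕ)
    (hgcd : Nat.gcd m (Finset.univ.gcd d) = 1)
    (w : ℕ) (hw : 0 < w) (hwm : w ∣ m)
    (hpair : ∀ i j : Fin n, i ≠ j → w ∣ d i + d j) :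
    w ∣ 2 :=
  stmt_6_general n hn d m hgcd w hwm hpair
end

section
/- Let n ≥ 5 and let μ_1, …, μ_n be rational numbers with 0 < μ_k < 1 for all k and with μ_1 + ⋯ + μ_n an integer. Assume that not all of μ_3, …, μ_n are equal to 1/2. Then the set {3, …, n} can be partitioned into two nonempty subsets B and C such that Σ_{k∈B} μ_k is not an integer and Σ_{k∈C} μ_k is not an integer; equivalently, there is a stable partition P of {1, …, n} (with respect to the μ_k) with {1} ∈ P, {2} ∈ P, and |P| = 4. -/
/-! Let `S` be the set of branch points to be split. If some `j ∈ S` has `∑_S μ - μ_j`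
non-integral, split `S` as `{j}` and `S \ {j}`; singletons are never integral since
`0 < μ_j < 1`. Otherwise all the `μ_j` with `j ∈ S` agree modulo `ℤ`, hence agree; taking a
value `μ ≠ 1/2`, the pair `{k, j}` has sum `2μ ∉ ℤ` and its complement has sum
`(∑_S μ - μ) - μ ∉ ℤ`. -/

open Finset

section OrderedRing

variable {R : Type*} [CommRing R] [LinearOrder R] [IsStrictOrderedRing R]

lemma not_exists_int_eq_of_pos_of_lt_one {q : R} (h0 : 0 < q) (h1 : q < 1) :
    ¬ ∃ z : ℤ, q = z := by
  rintro ⟨z, rfl⟩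
  have : (0 : ℤ) < z := by exact_mod_cast h0
  have : z < 1 := by exact_mod_cast h1
  omega

lemma eq_of_exists_int_sub_eq {a b : R} (ha0 : 0 < a) (ha1 : a < 1) (hb0 : 0 < b) (hb1 : b < 1)
    (h : ∃ z : ℤ, a - b = z) : a = b := by
  obtain ⟨z, hz⟩ := h
  have : (-1 : ℤ) < z := by exact_mod_cast (by push_cast; linarith : ((-1 : ℤ) : R) < z)
  have : z < 1 := by exact_mod_cast (by push_cast; linarith : (z : R) < ((1 : ℤ) : R))
  obtain rfl : z = 0 := by omega
  simpa [sub_eq_zero] using hz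

end OrderedRing

section StableSplit

variable {ι R : Type*} [DecidableEq ι] [Field R] [LinearOrder R] [IsStrictOrderedRing R]

def IsStableSplit (μ : ι → R) (S B C : Finset ι) : Prop :=
  B ∪ C = S ∧ Disjoint B C ∧ B.Nonempty ∧ C.Nonempty ∧
    (¬ ∃ z : ℤ, ∑ k ∈ B, μ k = z) ∧ (¬ ∃ z : ℤ, ∑ k ∈ C, μ k = z)

variable {μ : ι → R} {S : Finset ι}

lemma isStableSplit_singleton_erase {j : ι} (hj : j ∈ S) (hS : 2 ≤ #S)
    (h0 : 0 < μ j) (h1 : μ j < 1) (hsum : ¬ ∃ z : ℤ, ∑ k ∈ S, μ k - μ j = z) :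
    IsStableSplit μ S {j} (S.erase j) := by
  refine ⟨?_, by simp, singleton_nonempty j, ?_, ?_, ?_⟩
  · rw [← insert_eq, insert_erase hj]
  · rw [← card_pos, card_erase_of_mem hj]
    omega
  · rw [sum_singleton]
    exact not_exists_int_eq_of_pos_of_lt_one h0 h1
  · rwa [sum_erase_eq_sub hj]

lemma isStableSplit_pair_sdiff {j k : ι} (hj : j ∈ S) (hk : k ∈ S) (hjk : j ≠ k) (hS : 3 ≤ #S)
    (h0 : 0 < μ k) (h1 : μ k < 1) (hjk_eq : μ j = μ k) (hk_half : μ k ≠ 1 / 2)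
    (hsum : ∃ z : ℤ, ∑ i ∈ S, μ i - μ k = z) :
    IsStableSplit μ S {k, j} (S \ {k, j}) := by
  have hpair : {k, j} ⊆ S := insert_subset hk (singleton_subset_iff.mpr hj)
  have hpair_sum : ∑ i ∈ {k, j}, μ i = 2 * μ k := by
    rw [sum_pair hjk.symm, hjk_eq]
    ring
  refine ⟨union_sdiff_of_subset hpair, disjoint_sdiff, insert_nonempty k {j}, ?_, ?_, ?_⟩
  · rw [← card_pos, card_sdiff_of_subset hpair]
    have : #{k, j} ≤ 2 := card_le_two
    omega
  · rw [hpair_sum]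
    rintro ⟨z, hz⟩
    have : (0 : ℤ) < z := by exact_mod_cast (by linarith : (0 : R) < z)
    have : z < 2 := by exact_mod_cast (by push_cast; linarith : (z : R) < ((2 : ℤ) : R))
    obtain rfl : z = 1 := by omega
    exact hk_half (by push_cast at hz; linarith)
  · rw [sum_sdiff_eq_sub hpair, hpair_sum]
    obtain ⟨w, hw⟩ := hsum
    rintro ⟨z, hz⟩
    exact not_exists_int_eq_of_pos_of_lt_one h0 h1 ⟨w - z, by push_cast; linarith⟩

lemma exists_isStableSplit (hS : 3 ≤ #S) (h0 : ∀ k ∈ S, 0 < μ k) (h1 : ∀ k ∈ S, μ k < 1)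
    (hhalf : ∃ k ∈ S, μ k ≠ 1 / 2) : ∃ B C, IsStableSplit μ S B C := by
  by_cases hall : ∀ j ∈ S, ∃ z : ℤ, ∑ i ∈ S, μ i - μ j = z
  · obtain ⟨k, hk, hk_half⟩ := hhalf
    obtain ⟨j, hj⟩ : (S.erase k).Nonempty := by
      rw [← card_pos, card_erase_of_mem hk]
      omega
    have hjS := mem_of_mem_erase hj
    have hjk_eq : μ j = μ k := by
      refine eq_of_exists_int_sub_eq (h0 j hjS) (h1 j hjS) (h0 k hk) (h1 k hk) ?_
      obtain ⟨zj, hzj⟩ := hall j hjS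
      obtain ⟨zk, hzk⟩ := hall k hk
      exact ⟨zk - zj, by push_cast; linarith⟩
    exact ⟨_, _, isStableSplit_pair_sdiff hjS hk (ne_of_mem_erase hj) hS (h0 k hk) (h1 k hk)
      hjk_eq hk_half (hall k hk)⟩
  · push Not at hall
    obtain ⟨j, hj, hsum⟩ := hall
    exact ⟨_, _, isStableSplit_singleton_erase hj (by omega) (h0 j hj) (h1 j hj)
      fun ⟨z, hz⟩ => hsum z hz⟩

end StableSplit

theorem stmt_10_general (n : ℕ) (hn : 5 ≤ n) (μ : Fin n → ℚ)
    (h0 : ∀ k, 0 < μ k) (h1 : ∀ k, μ k < 1)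
    (hne : ∃ k : Fin n, 2 ≤ (k : ℕ) ∧ μ k ≠ 1 / 2) :
    ∃ B C : Finset (Fin n),
      B ∪ C = Finset.univ.filter (fun k : Fin n => 2 ≤ (k : ℕ)) ∧
      Disjoint B C ∧ B.Nonempty ∧ C.Nonempty ∧
      (¬ ∃ z : ℤ, ∑ k ∈ B, μ k = z) ∧ (¬ ∃ z : ℤ, ∑ k ∈ C, μ k = z) := by
  have hS : Finset.univ.filter (fun k : Fin n => 2 ≤ (k : ℕ)) = Ici ⟨2, by omega⟩ := by
    ext k
    simp [Fin.le_def]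
  refine exists_isStableSplit ?_ (fun k _ => h0 k) (fun k _ => h1 k) ?_
  · rw [hS, Fin.card_Ici, Fin.val_mk]
    omega
  · obtain ⟨k, hk, hk_half⟩ := hne
    exact ⟨k, by simpa using hk, hk_half⟩

theorem stmt_10 (n : ℕ) (hn : 5 ≤ n) (μ : Fin n → ℚ)
    (h0 : ∀ k, 0 < μ k) (h1 : ∀ k, μ k < 1)
    (hsum : ∃ N : ℤ, ∑ k, μ k = N)
    (hne : ∃ k : Fin n, 2 ≤ (k : ℕ) ∧ μ k ≠ 1 / 2) :
    ∃ B C : Finset (Fin n),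
      B ∪ C = Finset.univ.filter (fun k : Fin n => 2 ≤ (k : ℕ)) ∧
      Disjoint B C ∧ B.Nonempty ∧ C.Nonempty ∧
      (¬ ∃ z : ℤ, ∑ k ∈ B, μ k = z) ∧ (¬ ∃ z : ℤ, ∑ k ∈ C, μ k = z) :=
  stmt_10_general n hn μ h0 h1 hne
end

section
/- Let n ≥ 1, m ≥ 2, and a₁, …, a_{2m} ∈ ℂ. Set F = y_n^m + ⋯ + y_1^m + ∏_{i=1}^{2m}(x₁ − a_i·x₀) ∈ ℂ[x₀, x₁, y₁, …, y_n], and let φ : ℂ[z₁, …, z_{n+3}] → ℂ[x₀, x₁, y₁, …, y_n] be the ℂ-algebra homomorphism with φ(z₁) = x₀², φ(z₂) = x₀x₁, φ(z₃) = x₁², φ(z_{3+i}) = y_i for i = 1, …, n. Then there exists a homogeneous polynomial G ∈ ℂ[z₁, z₂, z₃] of degree m with G(x₀², x₀x₁, x₁²) = ∏_{i=1}^{2m}(x₁ − a_i·x₀), and for any such G, putting h = z_{n+3}^m + ⋯ + z₄^m + G, the preimage φ⁻¹((F)) of the principal ideal generated by F equals the ideal generated by h and f = z₁z₃ − z₂².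 -/
/-!
The substitution `φ` maps onto the polynomials invariant under `(x₀, x₁, y) ↦ (-x₀, -x₁, y)`, and
its kernel is `(f)`: modulo `f` every polynomial is `r₀ + z₂ r₁` with `r₀, r₁` free of `z₂`, whose
image `r₀(x₀², x₁², y) + x₀x₁ r₁(x₀², x₁², y)` vanishes only if `r₀ = r₁ = 0` (evaluate at
`(±√·, √·, y)`). Now `F = φ h` is a nonzero invariant, so `φ p = q F` forces `q` to be invariant,
`q = φ r`, and `p - r h ∈ ker φ`; hence `φ⁻¹(F) = (h) + (f)`. A `G` exists because the linear
factors pair up: `(x₁ - b x₀)(x₁ - c x₀) = bc x₀² - (b + c) x₀x₁ + x₁²`.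
-/

open MvPolynomial

theorem Ideal.comap_span_singleton_eq_span_singleton_sup_ker {A B F : Type*} [CommRing A]
    [CommRing B] [FunLike F A B] [RingHomClass F A B] (f : F) (h : A)
    (hdvd : ∀ p q, f p = q * f h → ∃ r, f r = q) :
    Ideal.comap f (Ideal.span {f h}) = Ideal.span {h} ⊔ RingHom.ker f := by
  apply le_antisymm
  · intro p hp
    obtain ⟨q, hq⟩ := Ideal.mem_span_singleton'.mp (Ideal.mem_comap.mp hp)
    obtain ⟨r, rfl⟩ := hdvd p q hq.symm
    have hker : p - r * h ∈ RingHom.ker f := by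
      rw [RingHom.mem_ker, map_sub, map_mul, hq, sub_self]
    rw [← add_sub_cancel (r * h) p]
    exact add_mem (Ideal.mem_sup_left (Ideal.mul_mem_left _ r (Ideal.mem_span_singleton_self h)))
      (Ideal.mem_sup_right hker)
  · refine sup_le ?_ ((RingHom.ker_eq_comap_bot f).trans_le (Ideal.comap_mono bot_le))
    rw [Ideal.span_le, Set.singleton_subset_iff]
    exact Ideal.mem_span_singleton_self (f h)

section Pairing

variable {K S : Type*} [CommRing K] [CommRing S] [Algebra K S]

lemma aeval_quadratic_eq_mul (u v : S) (b c : K) :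
    aeval ![u ^ 2, u * v, v ^ 2] (C (b * c) * X 0 - C (b + c) * X 1 + X 2 : MvPolynomial (Fin 3) K)
      = (v - algebraMap K S b * u) * (v - algebraMap K S c * u) := by
  simp only [map_add, map_sub, map_mul, aeval_X, aeval_C, Matrix.cons_val_zero,
    Matrix.cons_val_one, Matrix.cons_val_two, Matrix.head_cons, Matrix.tail_cons]
  ring

theorem exists_isHomogeneous_aeval_eq_prod (u v : S) (m : ℕ) (a : Fin (2 * m) → K) :
    ∃ G : MvPolynomial (Fin 3) K, G.IsHomogeneous m ∧
      aeval ![u ^ 2, u * v, v ^ 2] G = ∏ i, (v - algebraMap K S (a i) * u) := by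
  let e : Fin m × Fin 2 ≃ Fin (2 * m) := finProdFinEquiv.trans (finCongr (Nat.mul_comm m 2))
  refine ⟨∏ i : Fin m, (C (a (e (i, 0)) * a (e (i, 1))) * X 0
      - C (a (e (i, 0)) + a (e (i, 1))) * X 1 + X 2), ?_, ?_⟩
  · have := IsHomogeneous.prod Finset.univ _ (fun _ => 1) fun i _ =>
      ((isHomogeneous_C_mul_X (a (e (i, 0)) * a (e (i, 1))) (0 : Fin 3)).sub
        (isHomogeneous_C_mul_X (a (e (i, 0)) + a (e (i, 1))) (1 : Fin 3))).add (isHomogeneous_X K 2)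
    simpa only [Finset.sum_const, Finset.card_univ, Fintype.card_fin, smul_eq_mul, mul_one]
      using this
  · rw [map_prod, ← Fintype.prod_equiv e _ _ (fun _ => rfl), Fintype.prod_prod_type]
    simp only [aeval_quadratic_eq_mul, Fin.prod_univ_two]

end Pairing

noncomputable section Veronese

variable (K ι : Type*) [CommRing K]

-- `Sum.inl 0, 1, 2` stand for `z₁, z₂, z₃` (resp. `x₀, x₁`),
-- and `Sum.inr j` for `z_{j+4}` (resp. `y_{j+1}`).
def veronese : MvPolynomial (Fin 3 ⊕ ι) K →ₐ[K] MvPolynomial (Fin 2 ⊕ ι) K :=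
  aeval (Sum.elim ![X (Sum.inl 0) ^ 2, X (Sum.inl 0) * X (Sum.inl 1), X (Sum.inl 1) ^ 2]
    fun j => X (Sum.inr j))

def conic : MvPolynomial (Fin 3 ⊕ ι) K := X (Sum.inl 0) * X (Sum.inl 2) - X (Sum.inl 1) ^ 2

def squareXs : MvPolynomial (Fin 2 ⊕ ι) K →ₐ[K] MvPolynomial (Fin 2 ⊕ ι) K :=
  aeval (Sum.elim (fun k => X (Sum.inl k) ^ 2) fun j => X (Sum.inr j))

def negXs : MvPolynomial (Fin 2 ⊕ ι) K →ₐ[K] MvPolynomial (Fin 2 ⊕ ι) K :=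
  aeval (Sum.elim (fun k => -X (Sum.inl k)) fun j => X (Sum.inr j))

variable {K ι}

@[simp] lemma veronese_X_inl_zero : veronese K ι (X (Sum.inl 0)) = X (Sum.inl 0) ^ 2 := by
  simp [veronese]

@[simp] lemma veronese_X_inl_one :
    veronese K ι (X (Sum.inl 1)) = X (Sum.inl 0) * X (Sum.inl 1) := by
  simp [veronese]

@[simp] lemma veronese_X_inl_two : veronese K ι (X (Sum.inl 2)) = X (Sum.inl 1) ^ 2 := by
  simp [veronese]

@[simp] lemma veronese_X_inr (j : ι) : veronese K ι (X (Sum.inr j)) = X (Sum.inr j) := by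
  simp [veronese]

lemma veronese_rename_inl (G : MvPolynomial (Fin 3) K) :
    veronese K ι (rename Sum.inl G)
      = aeval ![X (Sum.inl 0) ^ 2, X (Sum.inl 0) * X (Sum.inl 1), X (Sum.inl 1) ^ 2] G := by
  rw [veronese, aeval_rename, Sum.elim_comp_inl]

lemma veronese_conic : veronese K ι (conic K ι) = 0 := by
  simp only [conic, map_sub, map_mul, map_pow, veronese_X_inl_zero, veronese_X_inl_one,
    veronese_X_inl_two]
  ring

lemma veronese_rename_succAbove (r : MvPolynomial (Fin 2 ⊕ ι) K) :
    veronese K ι (rename (Sum.map (Fin.succAbove 1) id) r) = squareXs K ι r := by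
  rw [veronese, squareXs, aeval_rename]
  congr 1
  ext (k | j)
  · fin_cases k <;> simp
  · simp

-- `rename (Sum.map (Fin.succAbove 1) id)` embeds the polynomials in `z₁, z₃, y`.
lemma exists_eq_mul_conic_add_rename (p : MvPolynomial (Fin 3 ⊕ ι) K) :
    ∃ u r₀ r₁, p = u * conic K ι + rename (Sum.map (Fin.succAbove 1) id) r₀
      + X (Sum.inl 1) * rename (Sum.map (Fin.succAbove 1) id) r₁ := by
  induction p using MvPolynomial.induction_on with
  | C c => exact ⟨0, C c, 0, by simp⟩
  | add p q hp hq =>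
    obtain ⟨u, r₀, r₁, rfl⟩ := hp
    obtain ⟨u', r₀', r₁', rfl⟩ := hq
    exact ⟨u + u', r₀ + r₀', r₁ + r₁', by simp only [map_add]; ring⟩
  | mul_X p i hp =>
    obtain ⟨u, r₀, r₁, rfl⟩ := hp
    have h₀ : rename (Sum.map (Fin.succAbove 1) id) (X (Sum.inl 0) : MvPolynomial (Fin 2 ⊕ ι) K)
        = X (Sum.inl 0) := by simp
    have h₁ : rename (Sum.map (Fin.succAbove 1) id) (X (Sum.inl 1) : MvPolynomial (Fin 2 ⊕ ι) K)
        = X (Sum.inl 2) := by simp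
    match i with
    | Sum.inl 0 =>
      exact ⟨u * X (Sum.inl 0), r₀ * X (Sum.inl 0), r₁ * X (Sum.inl 0),
        by simp only [map_mul, h₀]; ring⟩
    | Sum.inl 1 =>
      -- `z₂² = z₁z₃ - f`
      refine ⟨u * X (Sum.inl 1) - rename (Sum.map (Fin.succAbove 1) id) r₁,
        X (Sum.inl 0) * X (Sum.inl 1) * r₁, r₀, ?_⟩
      simp only [conic, map_mul, h₀, h₁]
      ring
    | Sum.inl 2 =>
      exact ⟨u * X (Sum.inl 2), r₀ * X (Sum.inl 1), r₁ * X (Sum.inl 1),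
        by simp only [map_mul, h₁]; ring⟩
    | Sum.inr j =>
      exact ⟨u * X (Sum.inr j), r₀ * X (Sum.inr j), r₁ * X (Sum.inr j),
        by simp only [map_mul, rename_X, Sum.map_inr, id]; ring⟩

lemma eval_squareXs (g : Fin 2 ⊕ ι → K) (r : MvPolynomial (Fin 2 ⊕ ι) K) :
    eval g (squareXs K ι r) = eval (Sum.elim (fun k => g (Sum.inl k) ^ 2) (g ∘ Sum.inr)) r := by
  change aeval g (squareXs K ι r) = aeval _ r
  rw [squareXs, comp_aeval_apply]
  congr 1
  ext (k | j) <;> simp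

@[simp] lemma negXs_X_inl (k : Fin 2) : negXs K ι (X (Sum.inl k)) = -X (Sum.inl k) := by
  simp [negXs]

@[simp] lemma negXs_X_inr (j : ι) : negXs K ι (X (Sum.inr j)) = X (Sum.inr j) := by
  simp [negXs]

lemma negXs_veronese (p : MvPolynomial (Fin 3 ⊕ ι) K) :
    negXs K ι (veronese K ι p) = veronese K ι p := by
  rw [veronese, comp_aeval_apply]
  congr 1
  ext (k | j)
  · fin_cases k <;> simp
  · simp

lemma exists_eq_veronese_add (q : MvPolynomial (Fin 2 ⊕ ι) K) :
    ∃ a b c, q = veronese K ι a + X (Sum.inl 0) * veronese K ι b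
      + X (Sum.inl 1) * veronese K ι c := by
  induction q using MvPolynomial.induction_on with
  | C c => exact ⟨C c, 0, 0, by simp⟩
  | add p q hp hq =>
    obtain ⟨a, b, c, rfl⟩ := hp
    obtain ⟨a', b', c', rfl⟩ := hq
    exact ⟨a + a', b + b', c + c', by simp only [map_add]; ring⟩
  | mul_X p i hp =>
    obtain ⟨a, b, c, rfl⟩ := hp
    match i with
    | Sum.inl 0 =>
      exact ⟨X (Sum.inl 0) * b + X (Sum.inl 1) * c, a, 0,
        by simp only [map_add, map_mul, map_zero, veronese_X_inl_zero, veronese_X_inl_one]; ring⟩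
    | Sum.inl 1 =>
      exact ⟨X (Sum.inl 1) * b + X (Sum.inl 2) * c, 0, a,
        by simp only [map_add, map_mul, map_zero, veronese_X_inl_one, veronese_X_inl_two]; ring⟩
    | Sum.inr j =>
      exact ⟨a * X (Sum.inr j), b * X (Sum.inr j), c * X (Sum.inr j),
        by simp only [map_mul, veronese_X_inr]; ring⟩

lemma exists_veronese_eq_of_negXs_eq [IsDomain K] [CharZero K] {q : MvPolynomial (Fin 2 ⊕ ι) K}
    (hq : negXs K ι q = q) : ∃ r, veronese K ι r = q := by
  obtain ⟨a, b, c, rfl⟩ := exists_eq_veronese_add q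
  refine ⟨a, ?_⟩
  have hneg : negXs K ι (veronese K ι a + X (Sum.inl 0) * veronese K ι b
      + X (Sum.inl 1) * veronese K ι c)
      = veronese K ι a - X (Sum.inl 0) * veronese K ι b - X (Sum.inl 1) * veronese K ι c := by
    simp only [map_add, map_mul, negXs_veronese, negXs_X_inl]
    ring
  have htwice : (2 : MvPolynomial (Fin 2 ⊕ ι) K)
      * (X (Sum.inl 0) * veronese K ι b + X (Sum.inl 1) * veronese K ι c) = 0 := by
    linear_combination hneg - hq
  linear_combination -(mul_eq_zero.mp htwice).resolve_left two_ne_zero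

lemma exists_veronese_eq_of_veronese_eq_mul [IsDomain K] [CharZero K]
    {F : MvPolynomial (Fin 2 ⊕ ι) K} (hF₀ : F ≠ 0) (hF : negXs K ι F = F)
    {p : MvPolynomial (Fin 3 ⊕ ι) K} {q : MvPolynomial (Fin 2 ⊕ ι) K}
    (h : veronese K ι p = q * F) : ∃ r, veronese K ι r = q := by
  refine exists_veronese_eq_of_negXs_eq (mul_right_cancel₀ hF₀ ?_)
  calc negXs K ι q * F = negXs K ι (q * F) := by rw [map_mul, hF]
    _ = q * F := by rw [← h, negXs_veronese]

variable [Fintype ι]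

lemma negXs_sum_pow_add_prod (m : ℕ) (a : Fin (2 * m) → K) :
    negXs K ι (∑ j, X (Sum.inr j) ^ m + ∏ i, (X (Sum.inl 1) - C (a i) * X (Sum.inl 0)))
      = ∑ j, X (Sum.inr j) ^ m + ∏ i, (X (Sum.inl 1) - C (a i) * X (Sum.inl 0)) := by
  have hlin : ∀ i, negXs K ι (X (Sum.inl 1) - C (a i) * X (Sum.inl 0))
      = -(X (Sum.inl 1) - C (a i) * X (Sum.inl 0)) := fun i => by
    simp only [map_sub, map_mul, negXs_X_inl, algHom_C, algebraMap_eq]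
    ring
  simp only [map_add, map_sum, map_prod, map_pow, negXs_X_inr, hlin, Finset.prod_neg,
    Finset.card_univ, Fintype.card_fin, pow_mul, neg_one_sq, one_pow, one_mul]

lemma sum_pow_add_prod_ne_zero [CharZero K] (m : ℕ) (a : Fin (2 * m) → K) :
    (∑ j, X (Sum.inr j) ^ m + ∏ i, (X (Sum.inl 1) - C (a i) * X (Sum.inl 0))
      : MvPolynomial (Fin 2 ⊕ ι) K) ≠ 0 := by
  intro h
  refine Nat.cast_add_one_ne_zero (R := K) (Fintype.card ι * 0 ^ m) ?_
  simpa using congrArg (eval (Sum.elim ![0, 1] 0)) h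

end Veronese

section Kernel

variable {K ι : Type*} [Field K] [IsAlgClosed K] [CharZero K]

lemma eq_zero_of_squareXs_add_X_mul_squareXs_eq_zero {r₀ r₁ : MvPolynomial (Fin 2 ⊕ ι) K}
    (h : squareXs K ι r₀ + X (Sum.inl 0) * X (Sum.inl 1) * squareXs K ι r₁ = 0) :
    r₀ = 0 ∧ r₁ = 0 := by
  have hv : ∀ v, eval v r₀ = 0 ∧ eval v (X (Sum.inl 0) * X (Sum.inl 1) * r₁) = 0 := by
    intro v
    obtain ⟨s, hs⟩ := IsAlgClosed.exists_pow_nat_eq (v (Sum.inl 0)) two_pos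
    obtain ⟨t, ht⟩ := IsAlgClosed.exists_pow_nat_eq (v (Sum.inl 1)) two_pos
    -- evaluate `h` at the two square roots `(±s, t, y)` of the point `v`
    have key : ∀ s' : K, s' ^ 2 = s ^ 2 →
        eval v r₀ + s' * t * eval v r₁ = 0 := by
      intro s' hs'
      have := congrArg (eval (Sum.elim ![s', t] (v ∘ Sum.inr))) h
      have hpt : Sum.elim (fun k => (Sum.elim ![s', t] (v ∘ Sum.inr)) (Sum.inl k) ^ 2)
          (Sum.elim ![s', t] (v ∘ Sum.inr) ∘ Sum.inr) = v := by
        ext (k | j)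
        · fin_cases k <;> simp [hs', hs, ht]
        · simp
      rw [map_add, map_mul, eval_squareXs, eval_squareXs, hpt] at this
      simpa using this
    have hpos := key s rfl
    have hneg := key (-s) (neg_sq s)
    constructor
    · linear_combination (hpos + hneg) / 2
    · simp only [map_mul, eval_X, ← hs, ← ht]
      linear_combination s * t / 2 * (hpos - hneg)
  have hr₀ : r₀ = 0 := MvPolynomial.funext fun v => by simpa using (hv v).1
  refine ⟨hr₀, ?_⟩
  have hr₁ : X (Sum.inl 0) * X (Sum.inl 1) * r₁ = 0 :=
    MvPolynomial.funext fun v => by simpa using (hv v).2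
  simpa [X_ne_zero] using hr₁

theorem ker_veronese :
    RingHom.ker (veronese K ι) = Ideal.span {conic K ι} := by
  apply le_antisymm
  · intro p hp
    obtain ⟨u, r₀, r₁, rfl⟩ := exists_eq_mul_conic_add_rename p
    have h : squareXs K ι r₀ + X (Sum.inl 0) * X (Sum.inl 1) * squareXs K ι r₁ = 0 := by
      simpa [veronese_conic, veronese_rename_succAbove] using hp
    obtain ⟨rfl, rfl⟩ := eq_zero_of_squareXs_add_X_mul_squareXs_eq_zero h
    simpa using Ideal.mul_mem_left _ u (Ideal.mem_span_singleton_self (conic K ι))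
  · rw [Ideal.span_le, Set.singleton_subset_iff, SetLike.mem_coe, RingHom.mem_ker]
    exact veronese_conic

end Kernel

theorem stmt_14_general (n m : ℕ) (a : Fin (2 * m) → ℂ)
    (F : MvPolynomial (Fin 2 ⊕ Fin n) ℂ)
    (hF : F = (∑ i : Fin n, (X (Sum.inr i)) ^ m) +
      ∏ i : Fin (2 * m), (X (Sum.inl 1) - C (a i) * X (Sum.inl 0)))
    (φ : MvPolynomial (Fin 3 ⊕ Fin n) ℂ →ₐ[ℂ] MvPolynomial (Fin 2 ⊕ Fin n) ℂ)
    (hφ : φ = MvPolynomial.aeval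
      (Sum.elim
        ![(X (Sum.inl 0) : MvPolynomial (Fin 2 ⊕ Fin n) ℂ) ^ 2,
          X (Sum.inl 0) * X (Sum.inl 1),
          (X (Sum.inl 1)) ^ 2]
        (fun j : Fin n => X (Sum.inr j)))) :
    (∃ G : MvPolynomial (Fin 3) ℂ, G.IsHomogeneous m ∧
      MvPolynomial.aeval
        ![(X (Sum.inl 0) : MvPolynomial (Fin 2 ⊕ Fin n) ℂ) ^ 2,
          X (Sum.inl 0) * X (Sum.inl 1),
          (X (Sum.inl 1)) ^ 2] G =
        ∏ i : Fin (2 * m), (X (Sum.inl 1) - C (a i) * X (Sum.inl 0))) ∧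
    (∀ G : MvPolynomial (Fin 3) ℂ, G.IsHomogeneous m →
      MvPolynomial.aeval
        ![(X (Sum.inl 0) : MvPolynomial (Fin 2 ⊕ Fin n) ℂ) ^ 2,
          X (Sum.inl 0) * X (Sum.inl 1),
          (X (Sum.inl 1)) ^ 2] G =
        ∏ i : Fin (2 * m), (X (Sum.inl 1) - C (a i) * X (Sum.inl 0)) →
      Ideal.comap φ (Ideal.span {F}) =
        Ideal.span {(∑ i : Fin n, (X (Sum.inr i)) ^ m) + rename Sum.inl G,
          X (Sum.inl 0) * X (Sum.inl 2) - (X (Sum.inl 1)) ^ 2}) := by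
  obtain rfl : φ = veronese ℂ (Fin n) := hφ
  subst hF
  refine ⟨exists_isHomogeneous_aeval_eq_prod (X (Sum.inl 0)) (X (Sum.inl 1)) m a,
    fun G _ hG => ?_⟩
  have hh : veronese ℂ (Fin n) (∑ i, X (Sum.inr i) ^ m + rename Sum.inl G)
      = ∑ i, X (Sum.inr i) ^ m + ∏ i, (X (Sum.inl 1) - C (a i) * X (Sum.inl 0)) := by
    simp only [map_add, map_sum, map_pow, veronese_X_inr, veronese_rename_inl, hG]
  have hF₀ := sum_pow_add_prod_ne_zero (ι := Fin n) m a
  have hFneg := negXs_sum_pow_add_prod (ι := Fin n) m a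
  rw [← hh] at hF₀ hFneg ⊢
  rw [Ideal.comap_span_singleton_eq_span_singleton_sup_ker _ _
    fun p q h => exists_veronese_eq_of_veronese_eq_mul hF₀ hFneg h, ker_veronese,
    ← Ideal.span_union, Set.singleton_union]
  rfl

theorem stmt_14 (n m : ℕ) (hn : 1 ≤ n) (hm : 2 ≤ m) (a : Fin (2 * m) → ℂ)
    (F : MvPolynomial (Fin 2 ⊕ Fin n) ℂ)
    (hF : F = (∑ i : Fin n, (X (Sum.inr i)) ^ m) +
      ∏ i : Fin (2 * m), (X (Sum.inl 1) - C (a i) * X (Sum.inl 0)))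
    (φ : MvPolynomial (Fin 3 ⊕ Fin n) ℂ →ₐ[ℂ] MvPolynomial (Fin 2 ⊕ Fin n) ℂ)
    (hφ : φ = MvPolynomial.aeval
      (Sum.elim
        ![(X (Sum.inl 0) : MvPolynomial (Fin 2 ⊕ Fin n) ℂ) ^ 2,
          X (Sum.inl 0) * X (Sum.inl 1),
          (X (Sum.inl 1)) ^ 2]
        (fun j : Fin n => X (Sum.inr j)))) :
    (∃ G : MvPolynomial (Fin 3) ℂ, G.IsHomogeneous m ∧
      MvPolynomial.aeval
        ![(X (Sum.inl 0) : MvPolynomial (Fin 2 ⊕ Fin n) ℂ) ^ 2,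
          X (Sum.inl 0) * X (Sum.inl 1),
          (X (Sum.inl 1)) ^ 2] G =
        ∏ i : Fin (2 * m), (X (Sum.inl 1) - C (a i) * X (Sum.inl 0))) ∧
    (∀ G : MvPolynomial (Fin 3) ℂ, G.IsHomogeneous m →
      MvPolynomial.aeval
        ![(X (Sum.inl 0) : MvPolynomial (Fin 2 ⊕ Fin n) ℂ) ^ 2,
          X (Sum.inl 0) * X (Sum.inl 1),
          (X (Sum.inl 1)) ^ 2] G =
        ∏ i : Fin (2 * m), (X (Sum.inl 1) - C (a i) * X (Sum.inl 0)) →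
      Ideal.comap φ (Ideal.span {F}) =
        Ideal.span {(∑ i : Fin n, (X (Sum.inr i)) ^ m) + rename Sum.inl G,
          X (Sum.inl 0) * X (Sum.inl 2) - (X (Sum.inl 1)) ^ 2}) :=
  stmt_14_general n m a F hF φ hφ
end
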